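/- arXiv:1804.01323 — 4 statements merged into one kernel-verified Lean document; each statement's English description precedes it below -/
import Mathlib

section
/- For any α, β ∈ ℝ and any partitions λ and μ of lengths r₁ and r₂, the generalized Jacobi polynomials satisfy Ω^{(α,β)}_{λ,μ} = (−1)^{r₁r₂}·Ω^{(α,−β)}_{μ,λ}. -/
open scoped BigOperators

noncomputable section

/-- Generalized binomial coefficient binom(y,k) = y(y-1)⋯(y-k+1)/k!. -/
def genBinom (y : ℝ) (k : ℕ) : ℝ :=
  (∏ i ∈ Finset.range k, (y - (i : ℝ))) / (Nat.factorial k : ℝ)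

/-- The Jacobi polynomial with real parameters α, β. -/
def jacobiP (α β : ℝ) (n : ℕ) : Polynomial ℝ :=
  Polynomial.C ((2 : ℝ)⁻¹ ^ n) *
    ∑ j ∈ Finset.range (n + 1),
      Polynomial.C (genBinom ((n : ℝ) + α) j * genBinom ((n : ℝ) + β) (n - j)) *
        (Polynomial.X - 1) ^ (n - j) * (Polynomial.X + 1) ^ j

/-- The Wronskian of a finite family of functions. -/
def wronskianFn {r : ℕ} (f : Fin r → ℝ → ℝ) (x : ℝ) : ℝ :=
  Matrix.det (Matrix.of fun i j : Fin r => iteratedDeriv (i : ℕ) (f j) x)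

/-- A partition: a weakly decreasing finite sequence of positive integers. -/
structure PartitionSeq where
  len : ℕ
  part : Fin len → ℕ
  pos : ∀ i, 0 < part i
  antitone : ∀ i j : Fin len, i ≤ j → part j ≤ part i

/-- The size |λ| of a partition. -/
def PartitionSeq.size (p : PartitionSeq) : ℕ := ∑ i, p.part i

/-- The associated strictly decreasing sequence nᵢ = λᵢ + r − i (1-indexed). -/
def PartitionSeq.seq (p : PartitionSeq) (i : Fin p.len) : ℕ :=
  p.part i + (p.len - 1 - (i : ℕ))

/-- Part at a natural index, 0 out of range. -/
def PartitionSeq.partAt (p : PartitionSeq) (i : ℕ) : ℕ :=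
  if h : i < p.len then p.part ⟨i, h⟩ else 0

/-- seq at a natural index, with the convention n₁ = 0 for the empty partition. -/
def PartitionSeq.seqAt (p : PartitionSeq) (i : ℕ) : ℕ :=
  if h : i < p.len then p.seq ⟨i, h⟩ else 0

/-- `q` is the conjugated partition of `p`. -/
def IsConjugate (p q : PartitionSeq) : Prop :=
  ∀ i : ℕ, q.partAt i = (Finset.univ.filter fun j : Fin p.len => i + 1 ≤ p.part j).card

/-- An even partition: even length and λ_{2i-1} = λ_{2i}. -/
def PartitionSeq.IsEven (p : PartitionSeq) : Prop :=
  Even p.len ∧ ∀ (i : ℕ) (h : 2 * i + 1 < p.len),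
    p.part ⟨2 * i, by omega⟩ = p.part ⟨2 * i + 1, h⟩

/-- γ + n ∉ {-1, …, -n}. -/
def NoDegRed (γ : ℝ) (n : ℕ) : Prop :=
  ∀ k : ℕ, 1 ≤ k → k ≤ n → γ + (n : ℝ) ≠ -(k : ℝ)

/-- γ + n ∉ {-1, …, -(n+e)}. -/
def NoDegRedExt (γ : ℝ) (n e : ℕ) : Prop :=
  ∀ k : ℕ, 1 ≤ k → k ≤ n + e → γ + (n : ℝ) ≠ -(k : ℝ)

/-- The eigenfunctions f₁,…,f_r entering the generalized Jacobi Wronskian. -/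
def gjFuns (α β : ℝ) (lam mu : PartitionSeq) : Fin (lam.len + mu.len) → ℝ → ℝ :=
  Fin.addCases (motive := fun _ => ℝ → ℝ)
    (fun i x => (jacobiP α β (lam.seq i)).eval x)
    (fun j x => (1 + x) ^ (-β) * (jacobiP α (-β) (mu.seq j)).eval x)

/-- The function (on (−1,∞)) defining the generalized Jacobi polynomial. -/
def gjPre (α β : ℝ) (lam mu : PartitionSeq) (x : ℝ) : ℝ :=
  (1 + x) ^ ((β + (lam.len : ℝ)) * (mu.len : ℝ)) * wronskianFn (gjFuns α β lam mu) x

/-- s = n − |λ| − |μ| + r₁. -/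
def xjS (lam mu : PartitionSeq) (n : ℕ) : ℕ :=
  n + lam.len - (lam.size + mu.size)

/-- The functions entering the exceptional Jacobi Wronskian. -/
def xjFuns (α β : ℝ) (lam mu : PartitionSeq) (s : ℕ) :
    Fin (lam.len + mu.len + 1) → ℝ → ℝ :=
  Fin.snoc (gjFuns α β lam mu) fun x => (jacobiP α β s).eval x

/-- The function (on (−1,∞)) defining the exceptional Jacobi polynomial of degree n. -/
def xjPre (α β : ℝ) (lam mu : PartitionSeq) (n : ℕ) (x : ℝ) : ℝ :=
  (1 + x) ^ ((β + (lam.len : ℝ) + 1) * (mu.len : ℝ)) *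
    wronskianFn (xjFuns α β lam mu (xjS lam mu n)) x

/-- The barred eigenfunctions. -/
def gjBarFuns (α β : ℝ) (lam mu : PartitionSeq) : Fin (lam.len + mu.len) → ℝ → ℝ :=
  Fin.addCases (motive := fun _ => ℝ → ℝ)
    (fun i x => (jacobiP α β (lam.seq i)).eval x)
    (fun j x => (1 - x) ^ (-α) * (jacobiP (-α) β (mu.seq j)).eval x)

def xjBarFuns (α β : ℝ) (lam mu : PartitionSeq) (s : ℕ) :
    Fin (lam.len + mu.len + 1) → ℝ → ℝ :=
  Fin.snoc (gjBarFuns α β lam mu) fun x => (jacobiP α β s).eval x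

/-- The function (on (−∞,1)) defining the barred exceptional Jacobi polynomial. -/
def xjBarPre (α β : ℝ) (lam mu : PartitionSeq) (n : ℕ) (x : ℝ) : ℝ :=
  (1 - x) ^ ((α + (lam.len : ℝ) + 1) * (mu.len : ℝ)) *
    wronskianFn (xjBarFuns α β lam mu (xjS lam mu n)) x

/-- The function (on (−∞,1)) defining the barred generalized Jacobi polynomial. -/
def gjBarPre (α β : ℝ) (lam mu : PartitionSeq) (x : ℝ) : ℝ :=
  (1 - x) ^ ((α + (lam.len : ℝ)) * (mu.len : ℝ)) * wronskianFn (gjBarFuns α β lam mu) x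

/-- Membership in the degree sequence ℕ_{λ,μ}. -/
def inDegSeq (lam mu : PartitionSeq) (n : ℕ) : Prop :=
  lam.size + mu.size ≤ n + lam.len ∧
  ∀ j : Fin lam.len,
    (n : ℤ) - (lam.size : ℤ) - (mu.size : ℤ) ≠ (lam.part j : ℤ) - ((j : ℕ) + 1 : ℤ)

/-- Monic normalization of a polynomial. -/
def monicOf (Q : Polynomial ℝ) : Polynomial ℝ :=
  Polynomial.C Q.leadingCoeff⁻¹ * Q

/-- The multiset of roots of P lying in (−1,1), with multiplicity. -/
def regularRoots (P : Polynomial ℝ) : Multiset ℝ :=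
  P.roots.filter fun x => -1 < x ∧ x < 1

/-- The Maya diagram (a′₁,…,a′_{r₄} | a₁,…,a_{r₁}) as a subset of ℤ. -/
def mayaOf (r₁ r₄ : ℕ) (a : Fin r₁ → ℕ) (a' : Fin r₄ → ℕ) : Set ℤ :=
  {k | (0 ≤ k ∧ ∃ i, k = (a i : ℤ)) ∨ (k < 0 ∧ ∀ i, k ≠ -(a' i : ℤ) - 1)}

/-- The entire extension of x ↦ x^{−ν} J_ν(x). -/
def besselScaled (ν : ℝ) (x : ℂ) : ℂ :=
  ∑' k : ℕ, ((-1 : ℂ) ^ k / ((Nat.factorial k : ℂ) * Complex.Gamma ((k : ℂ) + (ν : ℂ) + 1))) *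
    (2 : ℂ) ^ (-(2 * (k : ℂ) + (ν : ℂ))) * x ^ (2 * k)

/-- The Bessel function of the first kind (real argument). -/
def besselJ (ν : ℝ) (x : ℝ) : ℝ :=
  ∑' k : ℕ, ((-1 : ℝ) ^ k / ((Nat.factorial k : ℝ) * Real.Gamma ((k : ℝ) + ν + 1))) *
    (x / 2) ^ (2 * (k : ℝ) + ν)

/-- The list R₁,…,R_{r₁}, (x+c)^β R_{r₁+1},…,(x+c)^β R_r of functions. -/
def mixedFuns (r₁ r₂ : ℕ) (R : Fin (r₁ + r₂) → Polynomial ℝ) (c β : ℝ) :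
    Fin (r₁ + r₂) → ℝ → ℝ :=
  Fin.addCases (motive := fun _ => ℝ → ℝ)
    (fun i x => (R (Fin.castAdd r₂ i)).eval x)
    (fun j x => (x + c) ^ β * (R (Fin.natAdd r₁ j)).eval x)

def mixedPre (r₁ r₂ : ℕ) (R : Fin (r₁ + r₂) → Polynomial ℝ) (c β : ℝ) (x : ℝ) : ℝ :=
  (x + c) ^ (((r₁ : ℝ) - β) * (r₂ : ℝ)) * wronskianFn (mixedFuns r₁ r₂ R c β) x

/-- The four blocks of eigenfunctions for two Maya diagrams. -/
def mayaFuns (α β : ℝ) (r₁ r₂ r₃ r₄ : ℕ)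
    (a : Fin r₁ → ℕ) (b : Fin r₂ → ℕ) (b' : Fin r₃ → ℕ) (a' : Fin r₄ → ℕ) :
    Fin (r₁ + r₂ + r₃ + r₄) → ℝ → ℝ :=
  Fin.addCases (motive := fun _ => ℝ → ℝ)
    (Fin.addCases (motive := fun _ => ℝ → ℝ)
      (Fin.addCases (motive := fun _ => ℝ → ℝ)
        (fun i x => (jacobiP α β (a i)).eval x)
        (fun j x => (1 + x) ^ (-β) * (jacobiP α (-β) (b j)).eval x))
      (fun j x => (1 - x) ^ (-α) * (jacobiP (-α) β (b' j)).eval x))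
    (fun j x => (1 - x) ^ (-α) * (1 + x) ^ (-β) * (jacobiP (-α) (-β) (a' j)).eval x)



/-! ### Auxiliary lemmas -/

open Filter Set Finset in
private lemma aux_iteratedDerivWithin_of_isOpen' {f : ℝ → ℝ} {s : Set ℝ} (n : ℕ) (hs : IsOpen s) :
    Set.EqOn (iteratedDerivWithin n f s) (iteratedDeriv n f) s := by
  intro x hx
  simp only [iteratedDerivWithin, iteratedDeriv]
  rw [iteratedFDerivWithin_of_isOpen n hs hx]

open Filter Set Finset in
private lemma aux_differentiableAt_iteratedDeriv {f : ℝ → ℝ} {x : ℝ} {m : ℕ}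
    (hf : ContDiffAt ℝ (m + 1 : ℕ) f x) :
    DifferentiableAt ℝ (iteratedDeriv m f) x := by
  obtain ⟨u, hu, hcd⟩ := hf.contDiffOn le_rfl (by simp)
  obtain ⟨t, hts, ht, hxt⟩ := mem_nhds_iff.mp hu
  have hcd' : ContDiffOn ℝ (m + 1 : ℕ) f t := hcd.mono hts
  have hd : DifferentiableOn ℝ (iteratedDerivWithin m f t) t :=
    hcd'.differentiableOn_iteratedDerivWithin (by exact_mod_cast Nat.lt_succ_self m)
      ht.uniqueDiffOn
  have := (hd x hxt).differentiableAt (ht.mem_nhds hxt)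
  refine this.congr_of_eventuallyEq ?_
  filter_upwards [ht.mem_nhds hxt] with y hy
  exact (aux_iteratedDerivWithin_of_isOpen' m ht hy).symm

open Filter Set Finset in
private lemma aux_hasDerivAt_iteratedDeriv {f : ℝ → ℝ} {x : ℝ} {m : ℕ}
    (hf : ContDiffAt ℝ (m + 1 : ℕ) f x) :
    HasDerivAt (iteratedDeriv m f) (iteratedDeriv (m + 1) f x) x := by
  have h := (aux_differentiableAt_iteratedDeriv hf).hasDerivAt
  rwa [← iteratedDeriv_succ] at h

open Filter Set Finset in
private lemma aux_leibniz_iteratedDeriv {f g : ℝ → ℝ} (n : ℕ) :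
    ∀ x : ℝ, ContDiffAt ℝ (n : ℕ) f x → ContDiffAt ℝ (n : ℕ) g x →
    iteratedDeriv n (fun y => f y * g y) x =
      ∑ k ∈ range (n + 1),
        (n.choose k : ℝ) * iteratedDeriv k f x * iteratedDeriv (n - k) g x := by
  induction n with
  | zero => intro x hf hg; simp [iteratedDeriv_zero]
  | succ n ih =>
    intro x hf hg
    have hfe : ∀ᶠ y in nhds x, ContDiffAt ℝ (n : ℕ) f y := by
      filter_upwards [hf.eventually (by simp)] with y hy
      exact hy.of_le (by exact_mod_cast Nat.le_succ n)
    have hge : ∀ᶠ y in nhds x, ContDiffAt ℝ (n : ℕ) g y := by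
      filter_upwards [hg.eventually (by simp)] with y hy
      exact hy.of_le (by exact_mod_cast Nat.le_succ n)
    have hev : iteratedDeriv n (fun y => f y * g y) =ᶠ[nhds x]
        fun y => ∑ k ∈ range (n + 1),
          (n.choose k : ℝ) * iteratedDeriv k f y * iteratedDeriv (n - k) g y := by
      filter_upwards [hfe, hge] with y hfy hgy
      exact ih y hfy hgy
    rw [iteratedDeriv_succ, hev.deriv_eq]
    have hD : HasDerivAt
        (fun y => ∑ k ∈ range (n + 1),
          (n.choose k : ℝ) * iteratedDeriv k f y * iteratedDeriv (n - k) g y)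
        (∑ k ∈ range (n + 1), (n.choose k : ℝ) *
          (iteratedDeriv (k + 1) f x * iteratedDeriv (n - k) g x +
           iteratedDeriv k f x * iteratedDeriv (n - k + 1) g x)) x := by
      refine HasDerivAt.fun_sum fun k hk => ?_
      rw [Finset.mem_range] at hk
      have hfk : HasDerivAt (iteratedDeriv k f) (iteratedDeriv (k + 1) f x) x :=
        aux_hasDerivAt_iteratedDeriv (hf.of_le (by exact_mod_cast hk))
      have hgk : HasDerivAt (iteratedDeriv (n - k) g) (iteratedDeriv (n - k + 1) g x) x :=
        aux_hasDerivAt_iteratedDeriv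
          (hg.of_le (by exact_mod_cast Nat.succ_le_succ (Nat.sub_le n k)))
      have := (hfk.mul hgk).const_mul ((n.choose k : ℝ))
      simpa [mul_assoc] using this
    rw [hD.deriv]
    set A := fun k => iteratedDeriv k f x with hA
    set B := fun k => iteratedDeriv k g x with hB
    have expand : ∀ k, (n.choose k : ℝ) * (A (k+1) * B (n-k) + A k * B (n-k+1)) =
        (n.choose k : ℝ) * A (k+1) * B (n-k) + (n.choose k : ℝ) * A k * B (n-k+1) := by
      intro k; ring
    rw [Finset.sum_congr rfl fun k _ => expand k]
    rw [Finset.sum_add_distrib]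
    rw [Finset.sum_range_succ' (fun k => ((n+1).choose k : ℝ) * A k * B (n + 1 - k))]
    have step1 : ∑ k ∈ range (n + 1), ((n+1).choose (k+1) : ℝ) * A (k+1) * B (n + 1 - (k+1)) =
        ∑ k ∈ range (n + 1), ((n.choose k : ℝ) * A (k+1) * B (n-k)
          + (n.choose (k+1) : ℝ) * A (k+1) * B (n-k)) := by
      refine Finset.sum_congr rfl fun k hk => ?_
      rw [Finset.mem_range] at hk
      have h1 : n + 1 - (k + 1) = n - k := by omega
      rw [h1, Nat.choose_succ_succ]
      push_cast
      ring
    rw [step1, Finset.sum_add_distrib]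
    have step2 : ∑ k ∈ range (n + 1), (n.choose (k+1) : ℝ) * A (k+1) * B (n-k)
        + ((n+1).choose 0 : ℝ) * A 0 * B (n + 1 - 0) =
        ∑ k ∈ range (n + 1), (n.choose k : ℝ) * A k * B (n - k + 1) := by
      rw [Finset.sum_range_succ (fun k => (n.choose (k+1) : ℝ) * A (k+1) * B (n-k))]
      rw [Finset.sum_range_succ' (fun k => (n.choose k : ℝ) * A k * B (n - k + 1))]
      have h2 : ∑ k ∈ range n, (n.choose (k+1) : ℝ) * A (k+1) * B (n-k) =
          ∑ k ∈ range n, (n.choose (k+1) : ℝ) * A (k+1) * B (n - (k+1) + 1) := by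
        refine Finset.sum_congr rfl fun k hk => ?_
        rw [Finset.mem_range] at hk
        have : n - (k+1) + 1 = n - k := by omega
        rw [this]
      rw [h2]
      simp [Nat.choose_succ_self]
    rw [add_assoc, step2]

open Filter Set Finset in
private lemma aux_wronskian_mul_left {r : ℕ} (g : ℝ → ℝ) (f : Fin r → ℝ → ℝ) (x : ℝ)
    (hg : ∀ n : ℕ, ContDiffAt ℝ n g x) (hf : ∀ j, ∀ n : ℕ, ContDiffAt ℝ n (f j) x) :
    wronskianFn (fun j y => g y * f j y) x = g x ^ r * wronskianFn f x := by
  classical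
  set L : Matrix (Fin r) (Fin r) ℝ := Matrix.of fun i k =>
    if (k : ℕ) ≤ (i : ℕ) then ((i : ℕ).choose k : ℝ) * iteratedDeriv ((i : ℕ) - k) g x else 0
    with hL
  set M : Matrix (Fin r) (Fin r) ℝ :=
    Matrix.of fun i j : Fin r => iteratedDeriv (i : ℕ) (f j) x with hM
  have key : (Matrix.of fun i j : Fin r => iteratedDeriv (i : ℕ) (fun y => g y * f j y) x)
      = L * M := by
    ext i j
    rw [Matrix.mul_apply]
    simp only [Matrix.of_apply, hL, hM]
    rw [aux_leibniz_iteratedDeriv (i : ℕ) x (hg _) (hf j _)]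
    rw [← Finset.sum_range_reflect]
    rw [Fin.sum_univ_eq_sum_range (fun k =>
      (if k ≤ (i : ℕ) then ((i : ℕ).choose k : ℝ) * iteratedDeriv ((i : ℕ) - k) g x else 0) *
        iteratedDeriv k (f j) x) r]
    rw [← Finset.sum_subset (Finset.range_subset_range.mpr i.isLt)]
    · refine Finset.sum_congr rfl fun k hk => ?_
      rw [Finset.mem_range, Nat.lt_succ_iff] at hk
      have h1 : (i : ℕ) + 1 - 1 - k = (i : ℕ) - k := by omega
      rw [h1, if_pos hk, Nat.choose_symm hk, Nat.sub_sub_self hk]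
    · intro k _ hk
      rw [Finset.mem_range, Nat.lt_succ_iff] at hk
      rw [if_neg hk, zero_mul]
  have hLtri : L.BlockTriangular OrderDual.toDual := by
    intro i j hij
    simp only [hL, Matrix.of_apply]
    rw [if_neg]
    exact not_le.mpr (by exact_mod_cast hij)
  have hdetL : L.det = g x ^ r := by
    rw [Matrix.det_of_lowerTriangular L hLtri]
    have : ∀ i : Fin r, L i i = g x := by
      intro i
      simp [hL]
    rw [Finset.prod_congr rfl fun i _ => this i, Finset.prod_const, Finset.card_univ,
      Fintype.card_fin]
  show Matrix.det _ = _
  calc Matrix.det (Matrix.of fun i j : Fin r => iteratedDeriv (i : ℕ) (fun y => g y * f j y) x)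
      = Matrix.det (L * M) := by rw [key]
    _ = L.det * M.det := Matrix.det_mul L M
    _ = g x ^ r * wronskianFn f x := by rw [hdetL]; rfl

open Filter Set Finset Fin.NatCast Fin.CommRing in
private lemma aux_finRotate_pow_apply (n k : ℕ) (j : Fin (n + 1)) :
    ((finRotate (n + 1)) ^ k) j = j + (k : Fin (n + 1)) := by
  induction k generalizing j with
  | zero => simp
  | succ k ih =>
    rw [pow_succ, Equiv.Perm.mul_apply, ih, finRotate_succ_apply]
    push_cast
    ring

open Filter Set Finset Fin.NatCast in
private lemma aux_finRotate_pow_apply' (N : ℕ) [NeZero N] (k : ℕ) (j : Fin N) :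
    ((finRotate N) ^ k) j = j + (k : Fin N) := by
  cases N with
  | zero => exact j.elim0
  | succ N => exact aux_finRotate_pow_apply N k j

open Filter Set Finset Fin.NatCast in
private lemma aux_flip_eq_rotate_pow (m n : ℕ) (j : Fin (m + n)) :
    (finAddFlip (Fin.cast (Nat.add_comm m n) j) : Fin (m + n)) =
      ((finRotate (m + n)) ^ m) j := by
  rcases Nat.eq_zero_or_pos (m + n) with h | h
  · exact absurd j.isLt (by omega)
  · haveI : NeZero (m + n) := ⟨by omega⟩
    apply Fin.ext
    rw [aux_finRotate_pow_apply' (m + n) m j]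
    rw [Fin.add_def]
    rw [Fin.val_natCast]
    rcases lt_or_ge (j : ℕ) n with hj | hj
    · rw [show (Fin.cast (Nat.add_comm m n) j) = (⟨(j:ℕ), by omega⟩ : Fin (n + m)) from rfl]
      rw [finAddFlip_apply_mk_left hj]
      simp only
      rw [Nat.mod_eq_of_lt (show m < m + n by omega),
        Nat.mod_eq_of_lt (show (j : ℕ) + m < m + n by omega)]
      omega
    · rw [show (Fin.cast (Nat.add_comm m n) j) = (⟨(j:ℕ), by omega⟩ : Fin (n + m)) from rfl]
      rw [finAddFlip_apply_mk_right hj (by omega)]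
      simp only
      have hjlt := j.isLt
      rcases Nat.eq_zero_or_pos n with hn | hn
      · subst hn
        rw [show m % (m + 0) = 0 by simp, Nat.mod_eq_of_lt (by omega)]
        omega
      · rw [Nat.mod_eq_of_lt (show m < m + n by omega),
          Nat.mod_eq_sub_mod (by omega), Nat.mod_eq_of_lt (by omega)]
        omega

open Filter Set Finset in
private lemma aux_wronskian_flip {m n : ℕ} (F : Fin (m + n) → ℝ → ℝ) (x : ℝ) :
    wronskianFn (fun j : Fin (n + m) => F (finAddFlip j)) x
      = (-1 : ℝ) ^ (m * n) * wronskianFn F x := by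
  classical
  unfold wronskianFn
  rw [← Matrix.det_submatrix_equiv_self (finCongr (Nat.add_comm m n))
    (Matrix.of fun i j : Fin (n + m) => iteratedDeriv (i : ℕ) ((fun j => F (finAddFlip j)) j) x)]
  have hW : ((Matrix.of fun i j : Fin (n + m) =>
        iteratedDeriv (i : ℕ) ((fun j => F (finAddFlip j)) j) x).submatrix
        (finCongr (Nat.add_comm m n)) (finCongr (Nat.add_comm m n)))
      = (Matrix.of fun i j : Fin (m + n) => iteratedDeriv (i : ℕ) (F j) x).submatrix id
        (((finRotate (m + n)) ^ m : Equiv.Perm (Fin (m + n))) : Fin (m + n) → Fin (m + n)) := by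
    ext i j
    simp only [Matrix.submatrix_apply, Matrix.of_apply, id_eq, finCongr_apply, Fin.coe_cast]
    rw [← aux_flip_eq_rotate_pow m n j]
  rw [hW, Matrix.det_permute']
  congr 1
  rw [map_pow]
  rcases Nat.eq_zero_or_pos m with hm | hm
  · subst hm; simp
  · obtain ⟨m', rfl⟩ : ∃ m', m = m' + 1 := ⟨m - 1, by omega⟩
    have hsr : Equiv.Perm.sign (finRotate (m' + 1 + n)) = (-1) ^ (m' + n) := by
      have h : Equiv.Perm.sign (finRotate (m' + n + 1)) = (-1) ^ (m' + n) := by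
          have h' := sign_finRotate (m' + n + 1); rwa [Nat.add_sub_cancel] at h'
      have he : m' + n + 1 = m' + 1 + n := by omega
      rw [← he]
      exact h
    rw [hsr]
    rw [← pow_mul]
    have hexp : (m' + n) * (m' + 1) = (m' + 1) * n + m' * (m' + 1) := by ring
    rw [hexp, pow_add, Even.neg_one_pow (Nat.even_mul_succ_self m'), mul_one]
    push_cast
    ring

open Filter Set Finset in
private lemma aux_polynomial_contDiffAt (p : Polynomial ℝ) (n : ℕ) (y : ℝ) :
    ContDiffAt ℝ (n : ℕ) (fun t => p.eval t) y := by
  suffices h : ContDiff ℝ (n : ℕ) (fun t => p.eval t) from h.contDiffAt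
  induction p using Polynomial.induction_on' with
  | add p q hp hq => simpa [Polynomial.eval_add] using hp.add hq
  | monomial k a => simpa [Polynomial.eval_monomial] using
      (contDiff_const (c := a) (𝕜 := ℝ) (E := ℝ)).mul ((contDiff_id (𝕜 := ℝ) (E := ℝ)).pow k)

open Filter Set Finset in
private lemma aux_rpow_contDiffAt (γ : ℝ) (k : ℕ) {x : ℝ} (hx : -1 < x) :
    ContDiffAt ℝ (k : ℕ) (fun y : ℝ => (1 + y) ^ γ) x := by
  have h1 : ContDiffAt ℝ (k : ℕ) (fun t : ℝ => t ^ γ) (1 + x) :=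
    Real.contDiffAt_rpow_const_of_ne (by linarith)
  have h2 : ContDiffAt ℝ (k : ℕ) (fun y : ℝ => 1 + y) x :=
    (contDiff_const.add contDiff_id).contDiffAt
  exact h1.comp x h2


/-- Lemma: interchanging the two partitions flips the sign of β. -/
theorem generalizedJacobi_swap_partitions
    (α β : ℝ) (lam mu : PartitionSeq) :
    ∀ x : ℝ, -1 < x →
      gjPre α β lam mu x = (-1 : ℝ) ^ (lam.len * mu.len) * gjPre α (-β) mu lam x := by
  intro x hx
  have hx0 : (0 : ℝ) < 1 + x := by linarith
  set m := lam.len with hm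
  set n := mu.len with hn
  -- the two families
  set F : Fin (m + n) → ℝ → ℝ := gjFuns α β lam mu with hF
  set G : Fin (n + m) → ℝ → ℝ := gjFuns α (-β) mu lam with hG
  -- smoothness of the G family
  have hGsmooth : ∀ j : Fin (n + m), ∀ k : ℕ, ContDiffAt ℝ (k : ℕ) (G j) x := by
    intro j k
    refine Fin.addCases (motive := fun j => ContDiffAt ℝ (k : ℕ) (G j) x) ?_ ?_ j
    · intro j0
      have : G (Fin.castAdd m j0) = fun y => (jacobiP α (-β) (mu.seq j0)).eval y := by
        exact Fin.addCases_left (motive := fun _ => ℝ → ℝ) j0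
      rw [this]
      exact aux_polynomial_contDiffAt _ k x
    · intro j0
      have : G (Fin.natAdd n j0) =
          fun y => (1 + y) ^ (-(-β)) * (jacobiP α (-(-β)) (lam.seq j0)).eval y := by
        exact Fin.addCases_right (motive := fun _ => ℝ → ℝ) j0
      rw [this]
      exact (aux_rpow_contDiffAt (-(-β)) k hx).mul (aux_polynomial_contDiffAt _ k x)
  -- near x, g * G ∘ flip⁻¹ agrees with F
  have hA : ∀ j : Fin (n + m),
      (fun y => (1 + y) ^ (-β) * G j y) =ᶠ[nhds x] (fun y => F (finAddFlip j) y) := by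
    intro j
    refine Fin.addCases
      (motive := fun j => (fun y => (1 + y) ^ (-β) * G j y) =ᶠ[nhds x]
        (fun y => F (finAddFlip j) y)) ?_ ?_ j
    · intro j0
      filter_upwards [Ioi_mem_nhds hx] with y _
      rw [finAddFlip_apply_castAdd]
      simp +zetaDelta [hG, hF, gjFuns]
    · intro j0
      filter_upwards [Ioi_mem_nhds hx] with y hy
      have hy0 : (0 : ℝ) < 1 + y := by
        simp only [Set.mem_Ioi] at hy
        linarith
      rw [finAddFlip_apply_natAdd]
      simp +zetaDelta only [hG, hF, gjFuns, Fin.addCases_right, Fin.addCases_left]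
      rw [neg_neg, ← mul_assoc, ← Real.rpow_add hy0, neg_add_cancel, Real.rpow_zero, one_mul]
  -- Wronskians
  have hWeq : wronskianFn (fun j y => (1 + y) ^ (-β) * G j y) x
      = wronskianFn (fun j : Fin (n + m) => F (finAddFlip j)) x := by
    unfold wronskianFn
    congr 1
    ext i j
    exact (hA j).iteratedDeriv_eq (i : ℕ)
  have hflip := aux_wronskian_flip (m := m) (n := n) F x
  have hmul := aux_wronskian_mul_left (fun y : ℝ => (1 + y) ^ (-β)) G x
    (fun k => aux_rpow_contDiffAt (-β) k hx) hGsmooth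
  -- combine
  have hcomb : ((1 + x) ^ (-β)) ^ (n + m) * wronskianFn G x
      = (-1 : ℝ) ^ (m * n) * wronskianFn F x := by
    rw [← hmul, hWeq, hflip]
  have hsq : (-1 : ℝ) ^ (m * n) * (-1 : ℝ) ^ (m * n) = 1 := by
    rw [← pow_add]
    exact Even.neg_one_pow ⟨m * n, by ring⟩
  have hWF : wronskianFn F x
      = (-1 : ℝ) ^ (m * n) * (((1 + x) ^ (-β)) ^ (n + m) * wronskianFn G x) := by
    rw [hcomb, ← mul_assoc, hsq, one_mul]
  -- final assembly
  show (1 + x) ^ ((β + (m : ℝ)) * (n : ℝ)) * wronskianFn F x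
      = (-1 : ℝ) ^ (m * n) * ((1 + x) ^ ((-β + (n : ℝ)) * (m : ℝ)) * wronskianFn G x)
  rw [hWF]
  have hpow1 : ((1 + x) ^ (-β)) ^ (n + m) = (1 + x) ^ (-β * ((n : ℝ) + (m : ℝ))) := by
    rw [← Real.rpow_natCast ((1 + x) ^ (-β)) (n + m), ← Real.rpow_mul hx0.le]
    push_cast
    ring_nf
  rw [hpow1]
  rw [show (1 + x) ^ ((β + (m : ℝ)) * (n : ℝ)) *
      ((-1 : ℝ) ^ (m * n) * ((1 + x) ^ (-β * ((n : ℝ) + (m : ℝ))) * wronskianFn G x))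
    = (-1 : ℝ) ^ (m * n) * (((1 + x) ^ ((β + (m : ℝ)) * (n : ℝ)) *
      (1 + x) ^ (-β * ((n : ℝ) + (m : ℝ)))) * wronskianFn G x) from by ring]
  rw [← Real.rpow_add hx0]
  congr 2
  ring

end
end

section
/- Let λ and μ be partitions of lengths r₁ and r₂ with associated sequences (nᵢ) and (mⱼ), and let α, β ∈ ℝ and n ∈ ℕ_{λ,μ} satisfy, with s = n−|λ|−|μ|+r₁: α+β+nᵢ ∉ {−1,−2,…,−nᵢ} for i = 1,…,r₁; α+β+s ∉ {−1,−2,…,−s}; α−β+mⱼ ∉ {−1,−2,…,−mⱼ} for j = 1,…,r₂; β ≠ mⱼ−nᵢ for all i,j; and β ≠ mⱼ−s for all j. Then the exceptional Jacobi polynomial P^{(α,β)}_{λ,μ,n} has degree exactly n. -/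
open scoped BigOperators

noncomputable section

namespace XJ
open Polynomial Filter Finset Real

/-- Falling factorial with real argument. -/
noncomputable def ff (y : ℝ) (k : ℕ) : ℝ := ∏ i ∈ Finset.range k, (y - (i : ℝ))

lemma ff_zero (y : ℝ) : ff y 0 = 1 := by simp [ff]

lemma ff_succ (y : ℝ) (k : ℕ) : ff y (k + 1) = ff y k * (y - k) := by
  simp [ff, Finset.prod_range_succ]

lemma genBinom_eq (y : ℝ) (k : ℕ) : genBinom y k = ff y k / (Nat.factorial k : ℝ) := rfl

lemma ff_eq_smeval (y : ℝ) (k : ℕ) : ff y k = (descPochhammer ℤ k).smeval y := by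
  induction k with
  | zero => simp [ff_zero, descPochhammer_zero, Polynomial.smeval_one]
  | succ k ih =>
    rw [ff_succ, ih, descPochhammer_succ_right, Polynomial.smeval_mul]
    congr 1
    simp [Polynomial.smeval_sub, Polynomial.smeval_X, Polynomial.smeval_natCast]

lemma genBinom_eq_choose (y : ℝ) (k : ℕ) : genBinom y k = Ring.choose y k := by
  have h := Ring.descPochhammer_eq_factorial_smul_choose (R := ℝ) y k
  rw [← ff_eq_smeval] at h
  rw [genBinom_eq, h, nsmul_eq_mul]
  field_simp

lemma genBinom_add (x y : ℝ) (n : ℕ) :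
    genBinom (x + y) n = ∑ j ∈ Finset.range (n + 1), genBinom x j * genBinom y (n - j) := by
  rw [genBinom_eq_choose, Ring.add_choose_eq n (Commute.all x y)]
  rw [Finset.Nat.sum_antidiagonal_eq_sum_range_succ (fun a b => Ring.choose x a * Ring.choose y b)]
  exact Finset.sum_congr rfl fun j _ => by rw [genBinom_eq_choose, genBinom_eq_choose]

lemma genBinom_ne_zero (y : ℝ) (k : ℕ) (h : ∀ i : ℕ, i < k → y ≠ i) : genBinom y k ≠ 0 := by
  rw [genBinom_eq]
  apply div_ne_zero
  · exact Finset.prod_ne_zero_iff.2 fun i hi => sub_ne_zero_of_ne (h i (Finset.mem_range.1 hi))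
  · exact_mod_cast Nat.factorial_ne_zero k

end XJ
namespace XJ
open Polynomial Filter Finset Real

lemma jacobiP_natDegree_le (α β : ℝ) (n : ℕ) : (jacobiP α β n).natDegree ≤ n := by
  unfold jacobiP
  refine le_trans (natDegree_mul_le) ?_
  rw [natDegree_C, zero_add]
  refine Polynomial.natDegree_sum_le_of_forall_le _ _ fun j hj => ?_
  have hj' : j ≤ n := Nat.lt_succ_iff.1 (Finset.mem_range.1 hj)
  calc (C (genBinom ((n:ℝ) + α) j * genBinom ((n:ℝ) + β) (n - j)) * (X - 1) ^ (n - j) * (X + 1) ^ j).natDegree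
      ≤ (C (genBinom ((n:ℝ) + α) j * genBinom ((n:ℝ) + β) (n - j)) * (X - 1) ^ (n - j)).natDegree
        + ((X + 1 : Polynomial ℝ) ^ j).natDegree := natDegree_mul_le
    _ ≤ ((C (genBinom ((n:ℝ) + α) j * genBinom ((n:ℝ) + β) (n - j))).natDegree
        + ((X - 1 : Polynomial ℝ) ^ (n - j)).natDegree) + ((X + 1 : Polynomial ℝ) ^ j).natDegree := by
        exact Nat.add_le_add_right natDegree_mul_le _
    _ ≤ (0 + (n - j) * 1) + j * 1 := by
        refine Nat.add_le_add (Nat.add_le_add ?_ ?_) ?_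
        · exact le_of_eq (natDegree_C _)
        · refine le_trans (natDegree_pow_le) ?_
          have e1 : (X - 1 : Polynomial ℝ).natDegree = 1 := by
            simpa using natDegree_X_sub_C (1 : ℝ)
          rw [e1]
        · refine le_trans (natDegree_pow_le) ?_
          have : (X + 1 : Polynomial ℝ).natDegree ≤ 1 := by
            compute_degree
          exact Nat.mul_le_mul_left _ this
    _ ≤ n := by omega

lemma monic_aux (a b : ℕ) : ((X - 1 : Polynomial ℝ) ^ a * (X + 1) ^ b).Monic := by
  have h1 : (X - 1 : Polynomial ℝ).Monic := by
    simpa using monic_X_sub_C (1 : ℝ)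
  have h2 : (X + 1 : Polynomial ℝ).Monic := by
    simpa using monic_X_add_C (1 : ℝ)
  exact (h1.pow a).mul (h2.pow b)

lemma jacobiP_coeff (α β : ℝ) (n : ℕ) :
    (jacobiP α β n).coeff n = 2⁻¹ ^ n * genBinom (2 * n + α + β) n := by
  unfold jacobiP
  rw [Polynomial.coeff_C_mul, Polynomial.finset_sum_coeff]
  have key : ∀ j ∈ Finset.range (n + 1),
      (C (genBinom ((n:ℝ) + α) j * genBinom ((n:ℝ) + β) (n - j)) * (X - 1) ^ (n - j)
        * (X + 1) ^ j).coeff n = genBinom (↑n + α) j * genBinom ((n:ℝ) + β) (n - j) := by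
    intro j hj
    have hj' : j ≤ n := Nat.lt_succ_iff.1 (Finset.mem_range.1 hj)
    have hm := monic_aux (n - j) j
    have hd : ((X - 1 : Polynomial ℝ) ^ (n - j) * (X + 1) ^ j).natDegree = n := by
      have h1 : (X - 1 : Polynomial ℝ).Monic := by simpa using monic_X_sub_C (1 : ℝ)
      have h2 : (X + 1 : Polynomial ℝ).Monic := by simpa using monic_X_add_C (1 : ℝ)
      rw [(h1.pow _).natDegree_mul (h2.pow _), h1.natDegree_pow, h2.natDegree_pow]
      have e1 : (X - 1 : Polynomial ℝ).natDegree = 1 := by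
        simpa using natDegree_X_sub_C (1 : ℝ)
      have e2 : (X + 1 : Polynomial ℝ).natDegree = 1 := by
        simpa using natDegree_X_add_C (1 : ℝ)
      rw [e1, e2]; omega
    have hc := hm.coeff_natDegree
    rw [hd] at hc
    rw [mul_assoc, Polynomial.coeff_C_mul, hc, mul_one]
  rw [Finset.sum_congr rfl key]
  congr 1
  rw [← genBinom_add]
  congr 1
  push_cast
  ring

lemma jacobiP_coeff_ne_zero (α β : ℝ) (n : ℕ) (h : NoDegRed (α + β) n) :
    (jacobiP α β n).coeff n ≠ 0 := by
  rw [jacobiP_coeff]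
  refine mul_ne_zero (pow_ne_zero _ (by norm_num)) ?_
  refine genBinom_ne_zero _ _ fun i hi hyi => ?_
  have := h (n - i) (by omega) (by omega)
  apply this
  push_cast [Nat.cast_sub (le_of_lt hi)]
  linarith

end XJ
namespace XJ
open Polynomial Filter Finset Real

noncomputable def aP (c : ℝ) (q : Polynomial ℝ) : ℕ → Polynomial ℝ
  | 0 => q
  | (i + 1) => C (c - i) * aP c q i + (1 + X) * derivative (aP c q i)

lemma aP_natDegree_le (c : ℝ) (q : Polynomial ℝ) (m : ℕ) (h : q.natDegree ≤ m) :
    ∀ i, (aP c q i).natDegree ≤ m := by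
  intro i
  induction i with
  | zero => exact h
  | succ i ih =>
    show (C (c - i) * aP c q i + (1 + X) * derivative (aP c q i)).natDegree ≤ m
    refine le_trans (natDegree_add_le _ _) (max_le ?_ ?_)
    · refine le_trans natDegree_mul_le ?_
      rw [natDegree_C, zero_add]
      exact ih
    · by_cases hD : derivative (aP c q i) = 0
      · simp [hD]
      · have h1 : (aP c q i).natDegree ≠ 0 := by
          intro h0
          exact hD (derivative_of_natDegree_zero h0)
        have h2 : (derivative (aP c q i)).natDegree ≤ (aP c q i).natDegree - 1 :=
          natDegree_derivative_le _
        refine le_trans natDegree_mul_le ?_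
        have h3 : (1 + X : Polynomial ℝ).natDegree ≤ 1 := by compute_degree
        omega

lemma aP_coeff (c : ℝ) (q : Polynomial ℝ) (m : ℕ) (h : q.natDegree ≤ m) :
    ∀ i, (aP c q i).coeff m = ff (c + m) i * q.coeff m := by
  intro i
  induction i with
  | zero => simp [aP, ff_zero]
  | succ i ih =>
    show (C (c - i) * aP c q i + (1 + X) * derivative (aP c q i)).coeff m = _
    have hA := aP_natDegree_le c q m h i
    have hd1 : (derivative (aP c q i)).coeff m = 0 := by
      rw [Polynomial.coeff_derivative]
      have : (aP c q i).coeff (m + 1) = 0 := Polynomial.coeff_eq_zero_of_natDegree_lt (by omega)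
      rw [this, zero_mul]
    have hmul : ((1 + X) * derivative (aP c q i)).coeff m
        = (m : ℝ) * (aP c q i).coeff m := by
      rw [add_mul, one_mul, Polynomial.coeff_add]
      rcases m with _ | m'
      · simp only [Polynomial.coeff_X_mul_zero, hd1, add_zero, Nat.cast_zero, zero_mul]
      · rw [Polynomial.coeff_X_mul, hd1, zero_add, Polynomial.coeff_derivative]
        push_cast
        ring
    rw [Polynomial.coeff_add, Polynomial.coeff_C_mul, hmul, ih, ff_succ]
    ring

lemma tendsto_eval_div_pow (p : Polynomial ℝ) (d : ℕ) (h : p.natDegree ≤ d) :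
    Tendsto (fun x : ℝ => p.eval x / x ^ d) atTop (nhds (p.coeff d)) := by
  have hrepr : ∀ x : ℝ, p.eval x = ∑ k ∈ Finset.range (d + 1), p.coeff k * x ^ k := by
    intro x
    rw [Polynomial.eval_eq_sum_range' (Nat.lt_succ_of_le h)]
  have hlim : Tendsto (fun x : ℝ => ∑ k ∈ Finset.range (d + 1), p.coeff k * x ^ k / x ^ d)
      atTop (nhds (∑ k ∈ Finset.range (d + 1), if k = d then p.coeff d else 0)) := by
    refine tendsto_finset_sum _ fun k hk => ?_
    have hk' : k ≤ d := Nat.lt_succ_iff.1 (Finset.mem_range.1 hk)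
    rcases eq_or_lt_of_le hk' with rfl | hlt
    · simp only [if_pos rfl]
      have heq : (fun x : ℝ => p.coeff k) =ᶠ[atTop] fun x => p.coeff k * x ^ k / x ^ k := by
        filter_upwards [eventually_gt_atTop (0 : ℝ)] with x hx
        field_simp
      exact Tendsto.congr' heq tendsto_const_nhds
    · simp only [if_neg (Nat.ne_of_lt hlt)]
      have heq : (fun x : ℝ => p.coeff k / x ^ (d - k)) =ᶠ[atTop] fun x => p.coeff k * x ^ k / x ^ d := by
        filter_upwards [eventually_gt_atTop (0 : ℝ)] with x hx
        rw [eq_comm, div_eq_div_iff (by positivity) (by positivity)]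
        rw [mul_assoc, ← pow_add]
        congr 2
        omega
      rw [show (0 : ℝ) = p.coeff k * 0 by ring]
      refine Tendsto.congr' heq ?_
      have : Tendsto (fun x : ℝ => (x ^ (d - k))⁻¹) atTop (nhds 0) :=
        (tendsto_pow_atTop (by omega)).inv_tendsto_atTop
      simpa [div_eq_mul_inv] using this.const_mul (p.coeff k)
  have hsum : (∑ k ∈ Finset.range (d + 1), if k = d then p.coeff d else 0) = p.coeff d := by
    rw [Finset.sum_ite_eq' (Finset.range (d + 1)) d fun _ => p.coeff d]
    simp
  rw [hsum] at hlim
  refine Tendsto.congr' ?_ hlim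
  filter_upwards with x
  rw [hrepr x, Finset.sum_div]

end XJ
namespace XJ
open Polynomial Filter Finset Real

lemma iterDeriv_model (c : ℝ) (q : Polynomial ℝ) (f : ℝ → ℝ)
    (hf : ∀ x : ℝ, -1 < x → f x = (1 + x) ^ c * q.eval x) :
    ∀ i, ∀ x : ℝ, -1 < x →
      iteratedDeriv i f x = (1 + x) ^ (c - i) * (aP c q i).eval x := by
  intro i
  induction i with
  | zero =>
    intro x hx
    simpa [aP] using hf x hx
  | succ i ih =>
    intro x hx
    rw [iteratedDeriv_succ]
    have hmem : Set.Ioi (-1 : ℝ) ∈ nhds x := (isOpen_Ioi).mem_nhds hx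
    have hEv : iteratedDeriv i f =ᶠ[nhds x]
        fun y => (1 + y) ^ (c - i) * (aP c q i).eval y := by
      filter_upwards [hmem] with y hy
      exact ih y hy
    rw [hEv.deriv_eq]
    have h1x : (0 : ℝ) < 1 + x := by linarith
    have hrpow : HasDerivAt (fun y : ℝ => (1 + y) ^ (c - i))
        (1 * (c - i) * (1 + x) ^ (c - i - 1)) x := by
      have hbase : HasDerivAt (fun y : ℝ => 1 + y) 1 x := by
        simpa using (hasDerivAt_id x).const_add (1 : ℝ)
      exact hbase.rpow_const (Or.inl (ne_of_gt h1x))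
    have hpoly : HasDerivAt (fun y : ℝ => (aP c q i).eval y)
        ((derivative (aP c q i)).eval x) x := (aP c q i).hasDerivAt x
    have hprod := hrpow.mul hpoly
    rw [show deriv (fun y : ℝ => (1 + y) ^ (c - i) * (aP c q i).eval y) x = _ from hprod.deriv]
    have hsplit : (1 + x) ^ (c - (i : ℝ)) = (1 + x) ^ (c - ((i + 1 : ℕ) : ℝ)) * (1 + x) := by
      have h := Real.rpow_add h1x (c - ((i + 1 : ℕ) : ℝ)) 1
      rw [Real.rpow_one] at h
      rw [← h]
      congr 1
      push_cast
      ring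
    have hsplit2 : (1 + x) ^ (c - i - 1) = (1 + x) ^ (c - (i + 1 : ℕ)) := by
      congr 1
      push_cast
      ring
    show _ = (1 + x) ^ (c - (i + 1 : ℕ)) *
        (C (c - i) * aP c q i + (1 + X) * derivative (aP c q i)).eval x
    rw [hsplit, hsplit2]
    simp only [Polynomial.eval_add, Polynomial.eval_mul, Polynomial.eval_C, Polynomial.eval_one,
      Polynomial.eval_X]
    ring

lemma col_tendsto (c : ℝ) (q : Polynomial ℝ) (m : ℕ) (hq : q.natDegree ≤ m) (f : ℝ → ℝ)
    (hf : ∀ x : ℝ, -1 < x → f x = (1 + x) ^ c * q.eval x) (i : ℕ) :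
    Tendsto (fun x : ℝ => iteratedDeriv i f x * x ^ ((i : ℝ) - (c + m))) atTop
      (nhds (ff (c + m) i * q.coeff m)) := by
  have hA : Tendsto (fun x : ℝ => (aP c q i).eval x / x ^ m) atTop
      (nhds ((aP c q i).coeff m)) := tendsto_eval_div_pow _ m (aP_natDegree_le c q m hq i)
  have hB : Tendsto (fun x : ℝ => ((1 + x) / x) ^ (c - i)) atTop (nhds 1) := by
    have hb : Tendsto (fun x : ℝ => (1 + x) / x) atTop (nhds 1) := by
      have h0 : Tendsto (fun x : ℝ => x⁻¹ + 1) atTop (nhds (0 + 1)) :=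
        tendsto_inv_atTop_zero.add tendsto_const_nhds
      rw [zero_add] at h0
      refine Tendsto.congr' ?_ h0
      filter_upwards [eventually_gt_atTop (0 : ℝ)] with x hx
      field_simp
    have := hb.rpow_const (p := c - i) (Or.inl one_ne_zero)
    simpa using this
  have hmain := hB.mul hA
  rw [one_mul, aP_coeff c q m hq i] at hmain
  refine Tendsto.congr' ?_ hmain
  filter_upwards [eventually_gt_atTop (0 : ℝ)] with x hx
  have hx1 : (-1 : ℝ) < x := by linarith
  have h1x : (0 : ℝ) < 1 + x := by linarith
  rw [iterDeriv_model c q f hf i x hx1]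
  rw [Real.div_rpow (le_of_lt h1x) (le_of_lt hx)]
  have hxs : x ^ ((i : ℝ) - (c + m)) = (x ^ (c - i))⁻¹ * (x ^ m)⁻¹ := by
    rw [← Real.rpow_natCast x m, ← Real.rpow_neg (le_of_lt hx), ← Real.rpow_neg (le_of_lt hx),
      ← Real.rpow_add hx]
    congr 1
    ring
  rw [hxs]
  field_simp

end XJ
namespace XJ
open Polynomial Filter Finset Real

lemma ff_eq_eval (y : ℝ) (k : ℕ) : ff y k = (descPochhammer ℝ k).eval y := by
  induction k with
  | zero => simp [ff_zero, descPochhammer_zero]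
  | succ k ih => rw [ff_succ, descPochhammer_succ_eval, ih]

lemma prod_rpow_sum (x : ℝ) (hx : 0 < x) {ι : Type*} (s : Finset ι) (a : ι → ℝ) :
    ∏ j ∈ s, x ^ (a j) = x ^ (∑ j ∈ s, a j) := by
  classical
  induction s using Finset.cons_induction with
  | empty => simp [Real.rpow_zero]
  | cons i s hi ih =>
    rw [Finset.prod_cons, Finset.sum_cons, ih, ← Real.rpow_add hx]

lemma detPhi (r : ℕ) (e lc : Fin r → ℝ) :
    (Matrix.of fun i j : Fin r => ff (e j) (i : ℕ) * lc j).det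
      = (∏ j, lc j) * ∏ i : Fin r, ∏ j ∈ Finset.Ioi i, (e j - e i) := by
  classical
  set M : Matrix (Fin r) (Fin r) ℝ :=
    Matrix.of fun a b : Fin r => (descPochhammer ℝ (b : ℕ)).eval (e a) with hM
  have h1 : (Matrix.of fun i j : Fin r => ff (e j) (i : ℕ) * lc j)
      = Matrix.of fun i j : Fin r => lc j * M.transpose i j := by
    ext i j
    simp [hM, Matrix.transpose_apply, ff_eq_eval, mul_comm]
  rw [h1, Matrix.det_mul_row, Matrix.det_transpose]
  congr 1
  rw [← Matrix.det_eval_matrixOfPolynomials_eq_det_vandermonde e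
    (fun i : Fin r => descPochhammer ℝ (i : ℕ))
    (fun i => descPochhammer_natDegree (R := ℝ) (i : ℕ))
    (fun i => monic_descPochhammer ℝ (i : ℕ))]
  rw [Matrix.det_vandermonde]

lemma wronskian_tendsto {r : ℕ} (F : Fin r → ℝ → ℝ) (e lc : Fin r → ℝ)
    (h : ∀ j : Fin r, ∀ i : ℕ, Tendsto
      (fun x : ℝ => iteratedDeriv i (F j) x * x ^ ((i : ℝ) - e j)) atTop
      (nhds (ff (e j) i * lc j))) :
    Tendsto (fun x : ℝ => wronskianFn F x *
        x ^ ((∑ i : Fin r, ((i : ℕ) : ℝ)) - ∑ j, e j)) atTop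
      (nhds ((∏ j, lc j) * ∏ i : Fin r, ∏ j ∈ Finset.Ioi i, (e j - e i))) := by
  classical
  rw [← detPhi r e lc]
  set Φ : Matrix (Fin r) (Fin r) ℝ := Matrix.of fun i j : Fin r => ff (e j) (i : ℕ) * lc j
  have hB : Tendsto (fun x : ℝ =>
      (Matrix.of fun i j : Fin r =>
        iteratedDeriv (i : ℕ) (F j) x * x ^ (((i : ℕ) : ℝ) - e j)).det) atTop (nhds Φ.det) := by
    rw [Matrix.det_apply']
    have : ∀ x : ℝ, (Matrix.of fun i j : Fin r =>
        iteratedDeriv (i : ℕ) (F j) x * x ^ (((i : ℕ) : ℝ) - e j)).det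
        = ∑ σ : Equiv.Perm (Fin r), (Equiv.Perm.sign σ : ℝ) *
            ∏ i : Fin r, iteratedDeriv ((σ i : Fin r) : ℕ) (F i) x
              * x ^ ((((σ i : Fin r) : ℕ) : ℝ) - e i) := by
      intro x
      rw [Matrix.det_apply']
      rfl
    refine Tendsto.congr (fun x => (this x).symm) ?_
    refine tendsto_finset_sum _ fun σ _ => ?_
    refine Tendsto.const_mul _ ?_
    exact tendsto_finset_prod _ fun i _ => h i (σ i)
  refine Tendsto.congr' ?_ hB
  filter_upwards [eventually_gt_atTop (0 : ℝ)] with x hx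
  have hsub : ∀ i j : Fin r, x ^ (((i : ℕ) : ℝ) - e j)
      = x ^ (((i : ℕ) : ℝ)) * x ^ (- e j) := by
    intro i j
    rw [← Real.rpow_add hx]
    ring_nf
  have h1 : (Matrix.of fun i j : Fin r =>
      iteratedDeriv (i : ℕ) (F j) x * x ^ (((i : ℕ) : ℝ) - e j))
      = Matrix.of fun i j : Fin r => x ^ (- e j) *
          (Matrix.of fun i j : Fin r => x ^ (((i : ℕ) : ℝ)) *
            (Matrix.of fun i j : Fin r => iteratedDeriv (i : ℕ) (F j) x) i j) i j := by
    ext i j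
    rw [Matrix.of_apply]
    rw [hsub i j]
    simp only [Matrix.of_apply]
    ring
  rw [h1, Matrix.det_mul_row, Matrix.det_mul_column]
  rw [wronskianFn]
  rw [prod_rpow_sum x hx _ (fun j => - e j), prod_rpow_sum x hx _ (fun i : Fin r => ((i : ℕ) : ℝ))]
  rw [← mul_assoc, ← Real.rpow_add hx]
  have hexp : (∑ j : Fin r, -e j) + (∑ j : Fin r, ((j : ℕ) : ℝ))
      = (∑ i : Fin r, ((i : ℕ) : ℝ)) - ∑ j, e j := by
    rw [Finset.sum_neg_distrib]
    ring
  rw [hexp, mul_comm]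
end XJ
namespace XJ
open Polynomial Filter Finset Real

set_option maxHeartbeats 800000 in
lemma degree_eq_of_tendsto (P : Polynomial ℝ) (n : ℕ) (L : ℝ) (hL : L ≠ 0)
    (h : Tendsto (fun x : ℝ => P.eval x / x ^ n) atTop (nhds L)) :
    P.degree = (n : WithBot ℕ) := by
  have hP0 : P ≠ 0 := by
    rintro rfl
    have h0 : Tendsto (fun x : ℝ => eval x (0 : Polynomial ℝ) / x ^ n) atTop (nhds 0) := by
      simp only [Polynomial.eval_zero, zero_div]
      exact tendsto_const_nhds
    exact hL (tendsto_nhds_unique h h0)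
  set d := P.natDegree with hd
  have hlead : Tendsto (fun x : ℝ => P.eval x / x ^ d) atTop (nhds (P.leadingCoeff)) := by
    rw [Polynomial.leadingCoeff]
    exact tendsto_eval_div_pow P d le_rfl
  have hlead0 : P.leadingCoeff ≠ 0 := Polynomial.leadingCoeff_ne_zero.2 hP0
  rcases lt_trichotomy d n with hdn | rfl | hdn
  · exfalso
    have heq : (fun x : ℝ => (P.eval x / x ^ d) * (x ^ (n - d))⁻¹)
        =ᶠ[atTop] fun x : ℝ => P.eval x / x ^ n := by
      filter_upwards [eventually_gt_atTop (0 : ℝ)] with x hx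
      have hxne : x ≠ 0 := ne_of_gt hx
      rw [show n = d + (n - d) by omega, pow_add]
      field_simp
      rw [Nat.add_sub_cancel_left]
    have hz : Tendsto (fun x : ℝ => (P.eval x / x ^ d) * (x ^ (n - d))⁻¹) atTop
        (nhds (P.leadingCoeff * 0)) :=
      hlead.mul ((tendsto_pow_atTop (by omega : n - d ≠ 0)).inv_tendsto_atTop)
    rw [mul_zero] at hz
    exact hL (tendsto_nhds_unique h (Tendsto.congr' heq hz))
  · exact Polynomial.degree_eq_natDegree hP0
  · exfalso
    have heq : (fun x : ℝ => (P.eval x / x ^ n) * (x ^ (d - n))⁻¹)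
        =ᶠ[atTop] fun x : ℝ => P.eval x / x ^ d := by
      filter_upwards [eventually_gt_atTop (0 : ℝ)] with x hx
      have hxne : x ≠ 0 := ne_of_gt hx
      rw [show d = n + (d - n) by omega, pow_add]
      field_simp
      rw [Nat.add_sub_cancel_left]
    have hz : Tendsto (fun x : ℝ => (P.eval x / x ^ n) * (x ^ (d - n))⁻¹) atTop
        (nhds (L * 0)) :=
      h.mul ((tendsto_pow_atTop (by omega : d - n ≠ 0)).inv_tendsto_atTop)
    rw [mul_zero] at hz
    exact hlead0 (tendsto_nhds_unique hlead (Tendsto.congr' heq hz))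

lemma sum_fin_cast (k : ℕ) : ∑ i : Fin k, ((i : ℕ) : ℝ) = k * (k - 1) / 2 := by
  induction k with
  | zero => simp
  | succ k ih =>
    rw [Fin.sum_univ_castSucc]
    simp only [Fin.coe_castSucc, Fin.val_last]
    rw [ih]
    push_cast
    ring

lemma sum_fin_rev (k : ℕ) : ∑ i : Fin k, ((k - 1 - (i : ℕ) : ℕ) : ℝ) = k * (k - 1) / 2 := by
  have h : ∑ i : Fin k, (k - 1 - (i : ℕ)) = ∑ i : Fin k, (i : ℕ) := by
    rw [Fin.sum_univ_eq_sum_range (fun i => k - 1 - i) k, Fin.sum_univ_eq_sum_range (fun i => i) k]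
    exact Finset.sum_range_reflect (fun i => i) k
  rw [← sum_fin_cast k, ← Nat.cast_sum, ← Nat.cast_sum, h]

end XJ
namespace XJ
open Polynomial Filter Finset Real

lemma tendsto_ratio_rpow (c : ℝ) :
    Tendsto (fun x : ℝ => ((1 + x) / x) ^ c) atTop (nhds 1) := by
  have hb : Tendsto (fun x : ℝ => (1 + x) / x) atTop (nhds 1) := by
    have h0 : Tendsto (fun x : ℝ => x⁻¹ + 1) atTop (nhds (0 + 1)) :=
      tendsto_inv_atTop_zero.add tendsto_const_nhds
    rw [zero_add] at h0
    refine Tendsto.congr' ?_ h0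
    filter_upwards [eventually_gt_atTop (0 : ℝ)] with x hx
    field_simp
  have := hb.rpow_const (p := c) (Or.inl one_ne_zero)
  simpa using this

lemma seq_strictAnti (p : PartitionSeq) {i j : Fin p.len} (h : i < j) : p.seq j < p.seq i := by
  have h1 := p.antitone i j (le_of_lt h)
  have h2 : (i : ℕ) < (j : ℕ) := h
  have h3 := j.isLt
  unfold PartitionSeq.seq
  omega

lemma seq_injective (p : PartitionSeq) {i j : Fin p.len} (h : i ≠ j) : p.seq i ≠ p.seq j := by
  rcases lt_or_gt_of_ne h with hlt | hlt
  · exact (seq_strictAnti p hlt).ne'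
  · exact (seq_strictAnti p hlt).ne

end XJ
open Polynomial Filter Finset Real XJ in
/-- Lemma: the exceptional Jacobi polynomial has degree exactly n. -/
theorem exceptionalJacobi_degree
    (lam mu : PartitionSeq) (α β : ℝ) (n : ℕ)
    (hn : inDegSeq lam mu n)
    (hnd1 : ∀ i : Fin lam.len, NoDegRed (α + β) (lam.seq i))
    (hnd2 : NoDegRed (α + β) (xjS lam mu n))
    (hnd3 : ∀ j : Fin mu.len, NoDegRed (α - β) (mu.seq j))
    (hind1 : ∀ (i : Fin lam.len) (j : Fin mu.len), β ≠ (mu.seq j : ℝ) - (lam.seq i : ℝ))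
    (hind2 : ∀ j : Fin mu.len, β ≠ (mu.seq j : ℝ) - (xjS lam mu n : ℝ))
    (P : Polynomial ℝ)
    (hP : ∀ x : ℝ, -1 < x → P.eval x = xjPre α β lam mu n x) :
    P.degree = (n : WithBot ℕ) := by
  classical
  set r₁ := lam.len with hr₁
  set r₂ := mu.len with hr₂
  set s := xjS lam mu n with hs
  set F : Fin (r₁ + r₂ + 1) → ℝ → ℝ := xjFuns α β lam mu s with hF
  set e : Fin (r₁ + r₂ + 1) → ℝ :=
    Fin.snoc (Fin.addCases (fun i => ((lam.seq i : ℕ) : ℝ))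
      (fun j => -β + ((mu.seq j : ℕ) : ℝ))) ((s : ℕ) : ℝ) with he
  set lc : Fin (r₁ + r₂ + 1) → ℝ :=
    Fin.snoc (Fin.addCases (fun i => (jacobiP α β (lam.seq i)).coeff (lam.seq i))
      (fun j => (jacobiP α (-β) (mu.seq j)).coeff (mu.seq j)))
      ((jacobiP α β s).coeff s) with hlc
  -- values of e
  have hel : ∀ i : Fin lam.len, e (Fin.castSucc (Fin.castAdd mu.len i)) = ((lam.seq i : ℕ) : ℝ) := by
    intro i
    rw [he]
    rw [Fin.snoc_castSucc, Fin.addCases_left]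
  have her : ∀ j : Fin mu.len, e (Fin.castSucc (Fin.natAdd lam.len j))
      = -β + ((mu.seq j : ℕ) : ℝ) := by
    intro j
    rw [he]
    rw [Fin.snoc_castSucc, Fin.addCases_right]
  have helast : e (Fin.last (r₁ + r₂)) = ((s : ℕ) : ℝ) := by
    rw [he, Fin.snoc_last]
  -- values of F
  have hFl : ∀ i : Fin lam.len, F (Fin.castSucc (Fin.castAdd mu.len i))
      = fun x => (jacobiP α β (lam.seq i)).eval x := by
    intro i
    rw [hF]
    show xjFuns α β lam mu s _ = _
    rw [xjFuns, Fin.snoc_castSucc]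
    rw [gjFuns, Fin.addCases_left]
  have hFr : ∀ j : Fin mu.len, F (Fin.castSucc (Fin.natAdd lam.len j))
      = fun x => (1 + x) ^ (-β) * (jacobiP α (-β) (mu.seq j)).eval x := by
    intro j
    rw [hF]
    show xjFuns α β lam mu s _ = _
    rw [xjFuns, Fin.snoc_castSucc]
    rw [gjFuns, Fin.addCases_right]
  have hFlast : F (Fin.last (r₁ + r₂)) = fun x => (jacobiP α β s).eval x := by
    rw [hF]
    show xjFuns α β lam mu s _ = _
    rw [xjFuns, Fin.snoc_last]
  -- column limits
  have hcol : ∀ j : Fin (r₁ + r₂ + 1), ∀ i : ℕ, Tendsto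
      (fun x : ℝ => iteratedDeriv i (F j) x * x ^ ((i : ℝ) - e j)) atTop
      (nhds (ff (e j) i * lc j)) := by
    intro j i
    induction j using Fin.lastCases with
    | last =>
      have h := col_tendsto 0 (jacobiP α β s) s (jacobiP_natDegree_le α β s)
        (F (Fin.last (r₁ + r₂)))
        (by
          intro x hx
          rw [hFlast, Real.rpow_zero, one_mul]) i
      rw [helast, hlc, Fin.snoc_last]
      simpa using h
    | cast jj =>
      induction jj using Fin.addCases with
      | left i0 =>
        have h := col_tendsto 0 (jacobiP α β (lam.seq i0)) (lam.seq i0)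
          (jacobiP_natDegree_le α β (lam.seq i0))
          (F (Fin.castSucc (Fin.castAdd mu.len i0)))
          (by
            intro x hx
            rw [hFl i0, Real.rpow_zero, one_mul]) i
        rw [hel i0, hlc, Fin.snoc_castSucc, Fin.addCases_left]
        simpa using h
      | right j0 =>
        have h := col_tendsto (-β) (jacobiP α (-β) (mu.seq j0)) (mu.seq j0)
          (jacobiP_natDegree_le α (-β) (mu.seq j0))
          (F (Fin.castSucc (Fin.natAdd lam.len j0)))
          (by
            intro x hx
            rw [hFr j0]) i
        rw [her j0, hlc, Fin.snoc_castSucc, Fin.addCases_right]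
        simpa using h
  -- the Wronskian limit
  have hW := wronskian_tendsto F e lc hcol
  set L : ℝ := (∏ j, lc j) * ∏ i : Fin (r₁ + r₂ + 1), ∏ j ∈ Finset.Ioi i, (e j - e i) with hL
  -- nonvanishing of lc
  have hlc0 : ∀ j, lc j ≠ 0 := by
    intro j
    induction j using Fin.lastCases with
    | last =>
      rw [hlc, Fin.snoc_last]
      exact jacobiP_coeff_ne_zero α β s hnd2
    | cast jj =>
      induction jj using Fin.addCases with
      | left i0 =>
        rw [hlc, Fin.snoc_castSucc, Fin.addCases_left]
        exact jacobiP_coeff_ne_zero α β (lam.seq i0) (hnd1 i0)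
      | right j0 =>
        rw [hlc, Fin.snoc_castSucc, Fin.addCases_right]
        refine jacobiP_coeff_ne_zero α (-β) (mu.seq j0) ?_
        have := hnd3 j0
        rwa [sub_eq_add_neg] at this
  -- injectivity of e
  have hsne : ∀ i : Fin lam.len, lam.seq i ≠ s := by
    intro i hcontra
    have h2 := hn.2 i
    have hle := hn.1
    have hi := i.isLt
    unfold PartitionSeq.seq at hcontra
    rw [hs] at hcontra
    unfold xjS at hcontra
    omega
  have hinj : ∀ a b : Fin (r₁ + r₂ + 1), a ≠ b → e a ≠ e b := by
    have key : ∀ a b : Fin (r₁ + r₂ + 1), a ≠ b → e a = e b → False := by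
      intro a b hab heq
      induction a using Fin.lastCases with
      | last =>
        induction b using Fin.lastCases with
        | last => exact hab rfl
        | cast bb =>
          induction bb using Fin.addCases with
          | left i0 =>
            rw [helast, hel i0] at heq
            exact hsne i0 (by exact_mod_cast heq.symm)
          | right j0 =>
            rw [helast, her j0] at heq
            exact hind2 j0 (by linarith)
      | cast aa =>
        induction aa using Fin.addCases with
        | left i0 =>
          induction b using Fin.lastCases with
          | last =>
            rw [helast, hel i0] at heq
            exact hsne i0 (by exact_mod_cast heq)
          | cast bb =>
            induction bb using Fin.addCases with
            | left i1 =>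
              rw [hel i0, hel i1] at heq
              have : i0 ≠ i1 := by
                intro h'
                exact hab (by rw [h'])
              exact seq_injective lam this (by exact_mod_cast heq)
            | right j1 =>
              rw [hel i0, her j1] at heq
              exact hind1 i0 j1 (by linarith)
        | right j0 =>
          induction b using Fin.lastCases with
          | last =>
            rw [helast, her j0] at heq
            exact hind2 j0 (by linarith)
          | cast bb =>
            induction bb using Fin.addCases with
            | left i1 =>
              rw [her j0, hel i1] at heq
              exact hind1 i1 j0 (by linarith)
            | right j1 =>
              rw [her j0, her j1] at heq
              have : j0 ≠ j1 := by
                intro h'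
                exact hab (by rw [h'])
              have heq' : ((mu.seq j0 : ℕ) : ℝ) = ((mu.seq j1 : ℕ) : ℝ) := by linarith
              exact seq_injective mu this (by exact_mod_cast heq')
    exact fun a b hab h => key a b hab h
  have hL0 : L ≠ 0 := by
    rw [hL]
    refine mul_ne_zero ?_ ?_
    · exact Finset.prod_ne_zero_iff.2 fun j _ => hlc0 j
    · refine Finset.prod_ne_zero_iff.2 fun i _ => ?_
      refine Finset.prod_ne_zero_iff.2 fun j hj => ?_
      have hij : j ≠ i := (Finset.mem_Ioi.1 hj).ne'
      exact sub_ne_zero_of_ne (hinj j i hij)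
  -- exponent identity
  have hscast : ((s : ℕ) : ℝ) = (n : ℝ) + (r₁ : ℝ) - (lam.size : ℝ) - (mu.size : ℝ) := by
    rw [hs]
    unfold xjS
    have hle := hn.1
    push_cast [Nat.cast_sub hle]
    ring
  have hexp : ((β + (r₁ : ℝ) + 1) * (r₂ : ℝ)) + (∑ j, e j)
      - (∑ i : Fin (r₁ + r₂ + 1), ((i : ℕ) : ℝ)) = (n : ℝ) := by
    have hSe : (∑ j, e j) = ((lam.size : ℝ) + (r₁ : ℝ) * ((r₁ : ℝ) - 1) / 2)
        + (-β * (r₂ : ℝ) + ((mu.size : ℝ) + (r₂ : ℝ) * ((r₂ : ℝ) - 1) / 2))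
        + ((s : ℕ) : ℝ) := by
      rw [he, Fin.sum_univ_castSucc]
      simp only [Fin.snoc_castSucc, Fin.snoc_last]
      rw [Fin.sum_univ_add]
      congr 1
      congr 1
      · simp only [Fin.addCases_left]
        have : ∀ i : Fin lam.len, ((lam.seq i : ℕ) : ℝ)
            = ((lam.part i : ℕ) : ℝ) + ((lam.len - 1 - (i : ℕ) : ℕ) : ℝ) := by
          intro i
          unfold PartitionSeq.seq
          push_cast
          ring
        rw [Finset.sum_congr rfl fun i _ => this i, Finset.sum_add_distrib]
        rw [sum_fin_rev lam.len]
        congr 1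
        rw [PartitionSeq.size, Nat.cast_sum]
      · simp only [Fin.addCases_right]
        rw [Finset.sum_add_distrib, Finset.sum_const, Finset.card_univ, Fintype.card_fin]
        congr 1
        · simp [mul_comm]
        · have : ∀ j : Fin mu.len, ((mu.seq j : ℕ) : ℝ)
              = ((mu.part j : ℕ) : ℝ) + ((mu.len - 1 - (j : ℕ) : ℕ) : ℝ) := by
            intro j
            unfold PartitionSeq.seq
            push_cast
            ring
          rw [Finset.sum_congr rfl fun j _ => this j, Finset.sum_add_distrib]
          rw [sum_fin_rev mu.len]
          congr 1
          rw [PartitionSeq.size, Nat.cast_sum]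
    rw [hSe, hscast, sum_fin_cast]
    push_cast
    ring
  -- final limit
  have hfinal : Tendsto (fun x : ℝ => P.eval x / x ^ n) atTop (nhds L) := by
    have hmul := (tendsto_ratio_rpow ((β + (r₁ : ℝ) + 1) * (r₂ : ℝ))).mul hW
    rw [one_mul] at hmul
    refine Tendsto.congr' ?_ hmul
    filter_upwards [eventually_gt_atTop (0 : ℝ)] with x hx
    have hx1 : (-1 : ℝ) < x := by linarith
    have h1x : (0 : ℝ) < 1 + x := by linarith
    have hPx := hP x hx1
    rw [xjPre] at hPx
    rw [Real.div_rpow (le_of_lt h1x) (le_of_lt hx)]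
    rw [← Real.rpow_natCast x n] at *
    rw [eq_comm, div_eq_iff (by positivity : x ^ ((n : ℕ) : ℝ) ≠ 0)]
    rw [hPx]
    rw [div_eq_mul_inv, ← Real.rpow_neg (le_of_lt hx)]
    symm
    have hcomb : x ^ (-((β + (r₁ : ℝ) + 1) * (r₂ : ℝ)))
        * x ^ ((∑ i : Fin (r₁ + r₂ + 1), ((i : ℕ) : ℝ)) - ∑ j, e j)
        * x ^ ((n : ℕ) : ℝ) = 1 := by
      rw [← Real.rpow_add hx, ← Real.rpow_add hx]
      rw [show (-((β + (r₁ : ℝ) + 1) * (r₂ : ℝ)))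
          + ((∑ i : Fin (r₁ + r₂ + 1), ((i : ℕ) : ℝ)) - ∑ j, e j) + ((n : ℕ) : ℝ) = 0 by
        rw [← hexp]; push_cast; ring]
      exact Real.rpow_zero x
    calc (1 + x) ^ ((β + (r₁ : ℝ) + 1) * (r₂ : ℝ)) * x ^ (-((β + (r₁ : ℝ) + 1) * (r₂ : ℝ)))
          * (wronskianFn (xjFuns α β lam mu (xjS lam mu n)) x
            * x ^ ((∑ i : Fin (r₁ + r₂ + 1), ((i : ℕ) : ℝ)) - ∑ j, e j)) * x ^ ((n : ℕ) : ℝ)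
        = ((1 + x) ^ ((β + (r₁ : ℝ) + 1) * (r₂ : ℝ))
            * wronskianFn (xjFuns α β lam mu (xjS lam mu n)) x)
          * (x ^ (-((β + (r₁ : ℝ) + 1) * (r₂ : ℝ)))
            * x ^ ((∑ i : Fin (r₁ + r₂ + 1), ((i : ℕ) : ℝ)) - ∑ j, e j) * x ^ ((n : ℕ) : ℝ)) := by
          ring
      _ = (1 + x) ^ ((β + (r₁ : ℝ) + 1) * (r₂ : ℝ))
            * wronskianFn (xjFuns α β lam mu (xjS lam mu n)) x := by
          rw [hcomb, mul_one]
  exact degree_eq_of_tendsto P n L hL0 hfinal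
end
end

section
/- Let k₁,…,k_{r₁} and l₁,…,l_{r₂} be non-negative integers, r = r₁+r₂, and β ∈ ℝ. Then for all x > 0, Wr[x^{k₁},…,x^{k_{r₁}}, x^{l₁+β},…,x^{l_{r₂}+β}](x) = e·x^{N}, where N = Σ_{i=1}^{r₁}kᵢ + Σ_{j=1}^{r₂}lⱼ + βr₂ − r(r−1)/2 and e = ∏_{1≤i<j≤r₁}(kⱼ−kᵢ)·∏_{1≤i<j≤r₂}(lⱼ−lᵢ)·∏_{i=1}^{r₁}∏_{j=1}^{r₂}(β+lⱼ−kᵢ). -/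
open scoped BigOperators

noncomputable section

lemma iteratedDeriv_rpow_const (γ : ℝ) (n : ℕ) :
    ∀ x : ℝ, 0 < x →
    iteratedDeriv n (fun y : ℝ => y ^ γ) x
      = (∏ t ∈ Finset.range n, (γ - t)) * x ^ (γ - n) := by
  induction n with
  | zero => intro x hx; simp
  | succ n ih =>
    intro x hx
    rw [iteratedDeriv_succ]
    have hev : iteratedDeriv n (fun y : ℝ => y ^ γ) =ᶠ[nhds x]
        fun y => (∏ t ∈ Finset.range n, (γ - t)) * y ^ (γ - n) := by
      filter_upwards [isOpen_Ioi.mem_nhds hx] with y hy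
      exact ih y hy
    rw [hev.deriv_eq]
    have hd : HasDerivAt (fun y : ℝ => (∏ t ∈ Finset.range n, (γ - t)) * y ^ (γ - n))
        ((∏ t ∈ Finset.range n, (γ - t)) * ((γ - n) * x ^ (γ - n - 1))) x :=
      (Real.hasDerivAt_rpow_const (Or.inl hx.ne')).const_mul _
    rw [hd.deriv, Finset.prod_range_succ]
    have : γ - ((n:ℝ) + 1) = γ - n - 1 := by ring
    rw [mul_assoc]
    congr 1
    push_cast
    rw [this]


lemma prodIoi_eq {M : Type*} [CommMonoid M] {n : ℕ} (a : Fin n) (g : Fin n → M) :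
    (∏ j ∈ Finset.Ioi a, g j) = ∏ j, if a < j then g j else 1 := by
  rw [← Finset.prod_filter]
  congr 1
  ext j; simp

lemma prod_pairs {M : Type*} [CommMonoid M] {m : ℕ} (g : Fin m → Fin m → M) :
    (∏ p ∈ Finset.univ.filter (fun p : Fin m × Fin m => p.1 < p.2), g p.1 p.2)
    = ∏ i, ∏ j ∈ Finset.Ioi i, g i j := by
  rw [Finset.prod_filter, ← Finset.univ_product_univ, Finset.prod_product]
  exact Finset.prod_congr rfl fun i _ => (prodIoi_eq i (g i)).symm

lemma prod_Ioi_split {M : Type*} [CommMonoid M] {r₁ r₂ : ℕ}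
    (F : Fin (r₁+r₂) → Fin (r₁+r₂) → M) :
    (∏ i, ∏ j ∈ Finset.Ioi i, F i j)
  = ((∏ i : Fin r₁, ∏ j ∈ Finset.Ioi i, F (Fin.castAdd r₂ i) (Fin.castAdd r₂ j)) *
     (∏ i : Fin r₂, ∏ j ∈ Finset.Ioi i, F (Fin.natAdd r₁ i) (Fin.natAdd r₁ j))) *
    (∏ i : Fin r₁, ∏ j : Fin r₂, F (Fin.castAdd r₂ i) (Fin.natAdd r₁ j)) := by
  simp only [prodIoi_eq]
  rw [Fin.prod_univ_add]
  have e1 : ∀ i : Fin r₁,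
      (∏ j : Fin (r₁+r₂), if Fin.castAdd r₂ i < j then F (Fin.castAdd r₂ i) j else 1)
      = (∏ j : Fin r₁, if i < j then F (Fin.castAdd r₂ i) (Fin.castAdd r₂ j) else 1) *
        ∏ j : Fin r₂, F (Fin.castAdd r₂ i) (Fin.natAdd r₁ j) := by
    intro i
    rw [Fin.prod_univ_add]
    have hA : (∏ j : Fin r₁, if Fin.castAdd r₂ i < Fin.castAdd r₂ j
          then F (Fin.castAdd r₂ i) (Fin.castAdd r₂ j) else 1)
        = ∏ j : Fin r₁, if i < j then F (Fin.castAdd r₂ i) (Fin.castAdd r₂ j) else 1 :=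
      Finset.prod_congr rfl fun j _ =>
        if_congr (by simp only [Fin.lt_def, Fin.coe_castAdd]) rfl rfl
    have hB : (∏ j : Fin r₂, if Fin.castAdd r₂ i < Fin.natAdd r₁ j
          then F (Fin.castAdd r₂ i) (Fin.natAdd r₁ j) else 1)
        = ∏ j : Fin r₂, F (Fin.castAdd r₂ i) (Fin.natAdd r₁ j) :=
      Finset.prod_congr rfl fun j _ =>
        if_pos (by have := i.isLt; simp only [Fin.lt_def, Fin.coe_castAdd, Fin.coe_natAdd]; omega)
    rw [hA, hB]
  have e2 : ∀ i : Fin r₂,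
      (∏ j : Fin (r₁+r₂), if Fin.natAdd r₁ i < j then F (Fin.natAdd r₁ i) j else 1)
      = ∏ j : Fin r₂, if i < j then F (Fin.natAdd r₁ i) (Fin.natAdd r₁ j) else 1 := by
    intro i
    rw [Fin.prod_univ_add]
    have h1 : (∏ j : Fin r₁,
        if Fin.natAdd r₁ i < Fin.castAdd r₂ j then F (Fin.natAdd r₁ i) (Fin.castAdd r₂ j) else 1)
        = 1 := by
      refine Finset.prod_eq_one fun j _ => if_neg ?_
      have := j.isLt
      simp only [Fin.lt_def, Fin.coe_castAdd, Fin.coe_natAdd]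
      omega
    rw [h1, one_mul]
    exact Finset.prod_congr rfl fun j _ =>
      if_congr (by simp only [Fin.lt_def, Fin.coe_natAdd]; omega) rfl rfl
  rw [Finset.prod_congr rfl fun i _ => e1 i, Finset.prod_congr rfl fun i _ => e2 i,
    Finset.prod_mul_distrib]
  ac_rfl

lemma rpow_sum_eq {x : ℝ} (hx : 0 < x) {ι : Type*} (s : Finset ι) (f : ι → ℝ) :
    x ^ (∑ i ∈ s, f i) = ∏ i ∈ s, x ^ f i := by
  simp only [Real.rpow_def_of_pos hx, Finset.mul_sum, Real.exp_sum]

lemma sum_fin_cast (r : ℕ) :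
    (∑ i : Fin r, ((i : ℕ) : ℝ)) = (r : ℝ) * ((r : ℝ) - 1) / 2 := by
  rw [Fin.sum_univ_eq_sum_range]
  induction r with
  | zero => simp
  | succ n ih => rw [Finset.sum_range_succ, ih]; push_cast; ring

/-- Lemma: the Wronskian of the monomials x^{kᵢ}, x^{lⱼ+β}. -/
theorem wronskian_of_monomials
    (r₁ r₂ : ℕ) (kk : Fin r₁ → ℕ) (l : Fin r₂ → ℕ) (β : ℝ) :
    ∀ x : ℝ, 0 < x →
      wronskianFn (Fin.addCases (motive := fun _ : Fin (r₁ + r₂) => ℝ → ℝ)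
        (fun i y => y ^ (kk i))
        (fun j y => y ^ ((l j : ℝ) + β))) x =
      ((∏ p ∈ Finset.univ.filter (fun p : Fin r₁ × Fin r₁ => p.1 < p.2),
          ((kk p.2 : ℝ) - (kk p.1 : ℝ))) *
        (∏ p ∈ Finset.univ.filter (fun p : Fin r₂ × Fin r₂ => p.1 < p.2),
          ((l p.2 : ℝ) - (l p.1 : ℝ))) *
        (∏ i : Fin r₁, ∏ j : Fin r₂, (β + (l j : ℝ) - (kk i : ℝ)))) *
        x ^ ((∑ i : Fin r₁, (kk i : ℝ)) + (∑ j : Fin r₂, (l j : ℝ)) + β * (r₂ : ℝ) -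
          ((r₁ + r₂ : ℕ) : ℝ) * (((r₁ + r₂ : ℕ) : ℝ) - 1) / 2) := by
  intro x hx
  classical
  set γ : Fin (r₁ + r₂) → ℝ :=
    Fin.addCases (fun i => (kk i : ℝ)) (fun j => (l j : ℝ) + β) with hγ
  -- entries
  have hentry : ∀ (n : ℕ) (j : Fin (r₁+r₂)),
      iteratedDeriv n (Fin.addCases (motive := fun _ : Fin (r₁ + r₂) => ℝ → ℝ)
        (fun i y => y ^ (kk i))
        (fun j y => y ^ ((l j : ℝ) + β)) j) x
      = (∏ t ∈ Finset.range n, (γ j - t)) * x ^ (γ j - n) := by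
    intro n j
    induction j using Fin.addCases with
    | left i =>
      have h1 : (Fin.addCases (motive := fun _ : Fin (r₁ + r₂) => ℝ → ℝ)
          (fun i y => y ^ (kk i)) (fun j y => y ^ ((l j : ℝ) + β)) (Fin.castAdd r₂ i))
          = fun y : ℝ => y ^ ((kk i : ℕ) : ℝ) := by
        rw [Fin.addCases_left]
        funext y
        rw [Real.rpow_natCast]
      rw [h1, iteratedDeriv_rpow_const _ _ x hx]
      simp [hγ]
    | right i =>
      have h1 : (Fin.addCases (motive := fun _ : Fin (r₁ + r₂) => ℝ → ℝ)
          (fun i y => y ^ (kk i)) (fun j y => y ^ ((l j : ℝ) + β)) (Fin.natAdd r₁ i))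
          = fun y : ℝ => y ^ ((l i : ℝ) + β) := by
        rw [Fin.addCases_right]
      rw [h1, iteratedDeriv_rpow_const _ _ x hx]
      simp [hγ]
  unfold wronskianFn
  have hM : (Matrix.of fun i j : Fin (r₁+r₂) =>
        iteratedDeriv (i:ℕ) (Fin.addCases (motive := fun _ : Fin (r₁ + r₂) => ℝ → ℝ)
          (fun i y => y ^ (kk i)) (fun j y => y ^ ((l j : ℝ) + β)) j) x)
      = Matrix.of fun i j : Fin (r₁+r₂) =>
          (x ^ (((i:ℕ)):ℝ))⁻¹ * (x ^ (γ j) * ∏ t ∈ Finset.range (i:ℕ), (γ j - t)) := by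
    ext i j
    simp only [Matrix.of_apply]
    rw [hentry, Real.rpow_sub hx, div_eq_mul_inv]
    ring
  rw [hM]
  have h1 := Matrix.det_mul_column (fun i : Fin (r₁+r₂) => (x ^ (((i:ℕ)):ℝ))⁻¹)
      (Matrix.of fun i j : Fin (r₁+r₂) => x ^ (γ j) * ∏ t ∈ Finset.range (i:ℕ), (γ j - t))
  simp only [Matrix.of_apply] at h1
  rw [h1]
  have h2 := Matrix.det_mul_row (fun j : Fin (r₁+r₂) => x ^ (γ j))
      (Matrix.of fun i j : Fin (r₁+r₂) => ∏ t ∈ Finset.range (i:ℕ), (γ j - t))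
  simp only [Matrix.of_apply] at h2
  rw [h2]
  -- the Vandermonde determinant
  have hdetB : (Matrix.of fun i j : Fin (r₁+r₂) =>
        ∏ t ∈ Finset.range (i:ℕ), (γ j - t)).det
      = ∏ i, ∏ j ∈ Finset.Ioi i, (γ j - γ i) := by
    rw [← Matrix.det_transpose]
    have hp : ∀ i : Fin (r₁+r₂),
        (∏ t ∈ Finset.range (i:ℕ), (Polynomial.X - Polynomial.C (t:ℝ))).natDegree = (i:ℕ) := by
      intro i
      rw [Polynomial.natDegree_prod]
      · simp only [Polynomial.natDegree_X_sub_C]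
        simp
      · intro t _; exact Polynomial.X_sub_C_ne_zero (t:ℝ)
    have hm : ∀ i : Fin (r₁+r₂),
        (∏ t ∈ Finset.range (i:ℕ), (Polynomial.X - Polynomial.C (t:ℝ))).Monic :=
      fun i => Polynomial.monic_prod_of_monic _ _ fun t _ => Polynomial.monic_X_sub_C _
    have hvd := Matrix.det_eval_matrixOfPolynomials_eq_det_vandermonde γ
        (fun i => ∏ t ∈ Finset.range (i:ℕ), (Polynomial.X - Polynomial.C (t:ℝ))) hp hm
    rw [Matrix.det_vandermonde] at hvd
    have ht : (Matrix.of fun i j : Fin (r₁+r₂) =>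
          ∏ t ∈ Finset.range (i:ℕ), (γ j - (t:ℝ))).transpose
        = Matrix.of fun i j : Fin (r₁+r₂) => Polynomial.eval (γ i)
            ((fun i : Fin (r₁+r₂) =>
              ∏ t ∈ Finset.range (i:ℕ), (Polynomial.X - Polynomial.C (t:ℝ))) j) := by
      ext i j
      simp [Matrix.transpose_apply, Polynomial.eval_prod]
    rw [ht, ← hvd]
  rw [hdetB]
  -- scalar bookkeeping
  have hv : (∏ i : Fin (r₁+r₂), (x ^ (((i:ℕ)):ℝ))⁻¹)
      = (x ^ (((r₁+r₂:ℕ):ℝ) * (((r₁+r₂:ℕ):ℝ) - 1) / 2))⁻¹ := by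
    rw [Finset.prod_inv_distrib, ← rpow_sum_eq hx, sum_fin_cast]
  have hw : (∏ j : Fin (r₁+r₂), x ^ (γ j))
      = x ^ ((∑ i : Fin r₁, (kk i : ℝ)) + (∑ j : Fin r₂, (l j : ℝ)) + β * (r₂ : ℝ)) := by
    rw [← rpow_sum_eq hx]
    congr 1
    rw [Fin.sum_univ_add]
    simp [hγ, Finset.sum_add_distrib, mul_comm]
    ring
  have hprod : (∏ i, ∏ j ∈ Finset.Ioi i, (γ j - γ i))
      = (∏ p ∈ Finset.univ.filter (fun p : Fin r₁ × Fin r₁ => p.1 < p.2),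
          ((kk p.2 : ℝ) - (kk p.1 : ℝ))) *
        (∏ p ∈ Finset.univ.filter (fun p : Fin r₂ × Fin r₂ => p.1 < p.2),
          ((l p.2 : ℝ) - (l p.1 : ℝ))) *
        (∏ i : Fin r₁, ∏ j : Fin r₂, (β + (l j : ℝ) - (kk i : ℝ))) := by
    rw [prod_Ioi_split (fun i j => γ j - γ i),
      prod_pairs (fun i j : Fin r₁ => (kk j : ℝ) - (kk i : ℝ)),
      prod_pairs (fun i j : Fin r₂ => (l j : ℝ) - (l i : ℝ))]
    congr 1
    · congr 1
      · refine Finset.prod_congr rfl fun i _ => Finset.prod_congr rfl fun j _ => ?_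
        simp [hγ]
      · refine Finset.prod_congr rfl fun i _ => Finset.prod_congr rfl fun j _ => ?_
        simp [hγ]
    · refine Finset.prod_congr rfl fun i _ => Finset.prod_congr rfl fun j _ => ?_
      simp only [hγ, Fin.addCases_left, Fin.addCases_right]
      ring
  rw [hv, hw, hprod]
  have hxx : (x ^ (((r₁+r₂:ℕ):ℝ) * (((r₁+r₂:ℕ):ℝ) - 1) / 2))⁻¹ *
      x ^ ((∑ i : Fin r₁, (kk i : ℝ)) + (∑ j : Fin r₂, (l j : ℝ)) + β * (r₂ : ℝ))
      = x ^ ((∑ i : Fin r₁, (kk i : ℝ)) + (∑ j : Fin r₂, (l j : ℝ)) + β * (r₂ : ℝ) -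
          ((r₁ + r₂ : ℕ) : ℝ) * (((r₁ + r₂ : ℕ) : ℝ) - 1) / 2) := by
    rw [← Real.rpow_neg hx.le, ← Real.rpow_add hx]
    congr 1
    ring
  calc (x ^ (((r₁+r₂:ℕ):ℝ) * (((r₁+r₂:ℕ):ℝ) - 1) / 2))⁻¹ *
      (x ^ ((∑ i : Fin r₁, (kk i : ℝ)) + (∑ j : Fin r₂, (l j : ℝ)) + β * (r₂ : ℝ)) *
        ((∏ p ∈ Finset.univ.filter (fun p : Fin r₁ × Fin r₁ => p.1 < p.2),
          ((kk p.2 : ℝ) - (kk p.1 : ℝ))) *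
        (∏ p ∈ Finset.univ.filter (fun p : Fin r₂ × Fin r₂ => p.1 < p.2),
          ((l p.2 : ℝ) - (l p.1 : ℝ))) *
        (∏ i : Fin r₁, ∏ j : Fin r₂, (β + (l j : ℝ) - (kk i : ℝ)))))
      = ((∏ p ∈ Finset.univ.filter (fun p : Fin r₁ × Fin r₁ => p.1 < p.2),
          ((kk p.2 : ℝ) - (kk p.1 : ℝ))) *
        (∏ p ∈ Finset.univ.filter (fun p : Fin r₂ × Fin r₂ => p.1 < p.2),
          ((l p.2 : ℝ) - (l p.1 : ℝ))) *
        (∏ i : Fin r₁, ∏ j : Fin r₂, (β + (l j : ℝ) - (kk i : ℝ)))) *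
        ((x ^ (((r₁+r₂:ℕ):ℝ) * (((r₁+r₂:ℕ):ℝ) - 1) / 2))⁻¹ *
          x ^ ((∑ i : Fin r₁, (kk i : ℝ)) + (∑ j : Fin r₂, (l j : ℝ)) + β * (r₂ : ℝ))) := by
        ring
    _ = _ := by rw [hxx]
end
end

section
/- Let α, β ∈ ℝ and let n, N be non-negative integers such that α+β+n ∉ {−1,−2,…,−n−2N}. Then the Jacobi polynomial P_n^{(α,β)} is a linear combination of the Jacobi polynomials P_{n}^{(α+N,β+N)}, P_{n−1}^{(α+N,β+N)}, …, P_{n−t}^{(α+N,β+N)} with t = 2N; that is, there exist real numbers c₀,…,c_t such that P_n^{(α,β)} = Σ_{i=0}^{t} cᵢ·P_{n−i}^{(α+N,β+N)}, where P_m^{(α+N,β+N)} is interpreted as the zero polynomial when m < 0. -/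
open scoped BigOperators

noncomputable section

section AuxJacobiShift
open Polynomial

lemma genBinom_zero (y : ℝ) : genBinom y 0 = 1 := by simp [genBinom]

lemma genBinom_succ (y : ℝ) (k : ℕ) :
    ((k : ℝ) + 1) * genBinom y (k + 1) = (y - k) * genBinom y k := by
  rw [genBinom, genBinom, Finset.prod_range_succ, Nat.factorial_succ]
  push_cast
  have hk : (Nat.factorial k : ℝ) ≠ 0 := by positivity
  field_simp

lemma genBinom_shift (y : ℝ) (k : ℕ) :
    y * genBinom (y - 1) k = ((k : ℝ) + 1) * genBinom y (k + 1) := by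
  rw [genBinom, genBinom, Finset.prod_range_succ', Nat.factorial_succ]
  push_cast
  have hk : (Nat.factorial k : ℝ) ≠ 0 := by positivity
  have : ∀ i ∈ Finset.range k, y - ((i:ℝ)+1) = (y-1) - i := by intro i _; ring
  rw [show (∏ i ∈ Finset.range k, (y - ((i:ℝ) + 1))) = ∏ i ∈ Finset.range k, ((y-1) - (i:ℝ)) from Finset.prod_congr rfl this]
  field_simp
  ring

lemma genBinom_shift' (y : ℝ) (k : ℕ) :
    y * genBinom (y - 1) k = (y - k) * genBinom y k := by
  rw [genBinom_shift, genBinom_succ]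

lemma genBinom_pascal (y : ℝ) (k : ℕ) :
    genBinom (y + 1) (k + 1) = genBinom y (k + 1) + genBinom y k := by
  have h1 := genBinom_shift (y + 1) k
  rw [add_sub_cancel_right] at h1
  have h2 := genBinom_succ y k
  have hk : ((k : ℝ) + 1) ≠ 0 := by positivity
  apply mul_left_cancel₀ hk
  linear_combination -h1 - h2

-- middle coefficient identity
lemma coef_mid (α β : ℝ) (m k b : ℕ) (hm : m = k + b + 1) :
    (2 * (m : ℝ) + α + β + 3) *
        (genBinom ((m : ℝ) + 1 + α) (k + 1) * genBinom ((m : ℝ) + 1 + β) (b + 1))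
      + ((m : ℝ) + 1 + α) *
        (genBinom ((m : ℝ) + α) (k + 1) * genBinom ((m : ℝ) + 1 + β) b)
    = ((m : ℝ) + α + β + 2) *
        (genBinom ((m : ℝ) + 1 + α) (k + 1) * genBinom ((m : ℝ) + 1 + β + 1) (b + 1))
      + ((m : ℝ) + 1 + α) *
        (genBinom ((m : ℝ) + α) k * genBinom ((m : ℝ) + 1 + β) (b + 1)) := by
  subst hm
  push_cast
  have e : ((k : ℝ) + b + 1 + α) = ((k : ℝ) + b + 1 + 1 + α) - 1 := by ring
  rw [e, genBinom_pascal ((k : ℝ) + b + 1 + 1 + β) b]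
  have h1 := genBinom_succ ((k : ℝ) + b + 1 + 1 + β) b
  have h2 := genBinom_shift ((k : ℝ) + b + 1 + 1 + α) k
  have h3 := genBinom_shift' ((k : ℝ) + b + 1 + 1 + α) (k + 1)
  push_cast at h2 h3
  linear_combination genBinom ((k:ℝ)+b+1+1+β) b * h3 -
    genBinom ((k:ℝ)+b+1+1+β) (b+1) * h2 + genBinom ((k:ℝ)+b+1+1+α) (k+1) * h1

lemma coef_zero (α β : ℝ) (m : ℕ) :
    (2 * (m : ℝ) + α + β + 3) *
        (genBinom ((m : ℝ) + 1 + α) 0 * genBinom ((m : ℝ) + 1 + β) (m + 1))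
      + ((m : ℝ) + 1 + α) *
        (genBinom ((m : ℝ) + α) 0 * genBinom ((m : ℝ) + 1 + β) m)
    = ((m : ℝ) + α + β + 2) *
        (genBinom ((m : ℝ) + 1 + α) 0 * genBinom ((m : ℝ) + 1 + β + 1) (m + 1)) := by
  rw [genBinom_pascal ((m : ℝ) + 1 + β) m, genBinom_zero, genBinom_zero]
  have h1 := genBinom_succ ((m : ℝ) + 1 + β) m
  linear_combination h1

lemma coef_top (α β : ℝ) (m : ℕ) :
    (2 * (m : ℝ) + α + β + 3) *
        (genBinom ((m : ℝ) + 1 + α) (m + 1) * genBinom ((m : ℝ) + 1 + β) 0)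
    = ((m : ℝ) + α + β + 2) *
        (genBinom ((m : ℝ) + 1 + α) (m + 1) * genBinom ((m : ℝ) + 1 + β + 1) 0)
      + ((m : ℝ) + 1 + α) *
        (genBinom ((m : ℝ) + α) m * genBinom ((m : ℝ) + 1 + β) 0) := by
  rw [genBinom_zero, genBinom_zero]
  have e : ((m : ℝ) + α) = ((m : ℝ) + 1 + α) - 1 := by ring
  rw [e]
  have h2 := genBinom_shift ((m : ℝ) + 1 + α) m
  linear_combination -h2

lemma sum_identity (α β : ℝ) (m : ℕ) :
    C (2 * (m : ℝ) + α + β + 3) *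
      ∑ j ∈ Finset.range (m + 2),
        C (genBinom ((m : ℝ) + 1 + α) j * genBinom ((m : ℝ) + 1 + β) (m + 1 - j)) *
          (X - 1) ^ (m + 1 - j) * (X + 1) ^ j
  = C ((m : ℝ) + α + β + 2) *
      ∑ j ∈ Finset.range (m + 2),
        C (genBinom ((m : ℝ) + 1 + α) j * genBinom ((m : ℝ) + 1 + β + 1) (m + 1 - j)) *
          (X - 1) ^ (m + 1 - j) * (X + 1) ^ j
  + C (2 : ℝ) * (C ((m : ℝ) + 1 + α) *
      ∑ j ∈ Finset.range (m + 1),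
        C (genBinom ((m : ℝ) + α) j * genBinom ((m : ℝ) + 1 + β) (m - j)) *
          (X - 1) ^ (m - j) * (X + 1) ^ j) := by
  -- abbreviations
  set u : ℝ[X] := X - 1 with hu
  set v : ℝ[X] := X + 1 with hvv
  have hv : (C (2:ℝ) : ℝ[X]) = v - u := by rw [hu, hvv, map_ofNat]; ring
  -- the four families
  set L : ℕ → ℝ[X] := fun j =>
    C (2 * (m : ℝ) + α + β + 3) *
      (C (genBinom ((m : ℝ) + 1 + α) j * genBinom ((m : ℝ) + 1 + β) (m + 1 - j)) *
        u ^ (m + 1 - j) * v ^ j) with hL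
  set R : ℕ → ℝ[X] := fun j =>
    C ((m : ℝ) + α + β + 2) *
      (C (genBinom ((m : ℝ) + 1 + α) j * genBinom ((m : ℝ) + 1 + β + 1) (m + 1 - j)) *
        u ^ (m + 1 - j) * v ^ j) with hR
  set Ff : ℕ → ℝ[X] := fun j =>
    C ((m : ℝ) + 1 + α) *
      (C (genBinom ((m : ℝ) + α) (j - 1) * genBinom ((m : ℝ) + 1 + β) (m + 1 - j)) *
        u ^ (m + 1 - j) * v ^ j) with hFf
  set Gf : ℕ → ℝ[X] := fun j =>
    C ((m : ℝ) + 1 + α) *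
      (C (genBinom ((m : ℝ) + α) j * genBinom ((m : ℝ) + 1 + β) (m - j)) *
        u ^ (m + 1 - j) * v ^ j) with hGf
  -- rewrite goal into sums of the families
  have goal' : ∑ j ∈ Finset.range (m + 2), L j
      = ∑ j ∈ Finset.range (m + 2), R j
        + ∑ j ∈ Finset.range (m + 1),
            (C (2:ℝ) * (C ((m : ℝ) + 1 + α) *
              (C (genBinom ((m : ℝ) + α) j * genBinom ((m : ℝ) + 1 + β) (m - j)) *
                u ^ (m - j) * v ^ j))) → True := fun _ => trivial
  clear goal'
  have hthird : ∀ j ∈ Finset.range (m + 1),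
      C (2:ℝ) * (C ((m : ℝ) + 1 + α) *
        (C (genBinom ((m : ℝ) + α) j * genBinom ((m : ℝ) + 1 + β) (m - j)) *
          u ^ (m - j) * v ^ j))
      = Ff (j + 1) - Gf j := by
    intro j hj
    rw [Finset.mem_range] at hj
    have hj' : j ≤ m := by omega
    rw [hFf, hGf]
    simp only
    have e1 : m + 1 - (j + 1) = m - j := by omega
    have e2 : j + 1 - 1 = j := by omega
    have e3 : m + 1 - j = m - j + 1 := by omega
    rw [e1, e2, e3]
    linear_combination (C ((m : ℝ) + 1 + α) *
      (C (genBinom ((m : ℝ) + α) j * genBinom ((m : ℝ) + 1 + β) (m - j)) *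
        u ^ (m - j) * v ^ j)) * hv
  -- the pointwise master identity
  have main : ∀ j ∈ Finset.range (m + 2),
      L j + Gf j + (if j = 0 then Ff j else 0)
      = R j + Ff j + (if j = m + 1 then Gf j else 0) := by
    intro j hj
    rw [Finset.mem_range] at hj
    by_cases h0 : j = 0
    · subst h0
      rw [if_pos rfl, if_neg (by omega)]
      rw [hL, hR, hFf, hGf]
      simp only [Nat.sub_zero, Nat.zero_sub, pow_zero, mul_one]
      have hc := coef_zero α β m
      have hcp := congrArg (Polynomial.C : ℝ → ℝ[X]) hc
      simp only [map_add, map_mul, map_sub, map_one, map_ofNat] at hcp ⊢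
      linear_combination (u ^ (m + 1)) * hcp
    by_cases htop : j = m + 1
    · subst htop
      rw [if_neg h0, if_pos rfl]
      rw [hL, hR, hFf, hGf]
      simp only [Nat.sub_self, Nat.add_sub_cancel, pow_zero, mul_one]
      have e4 : m - (m + 1) = 0 := by omega
      rw [e4]
      have hc := coef_top α β m
      have hcp := congrArg (Polynomial.C : ℝ → ℝ[X]) hc
      simp only [map_add, map_mul, map_sub, map_one, map_ofNat] at hcp ⊢
      linear_combination (v ^ (m + 1)) * hcp
    · obtain ⟨k, rfl⟩ : ∃ k, j = k + 1 := ⟨j - 1, by omega⟩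
      rw [if_neg h0, if_neg htop]
      rw [hL, hR, hFf, hGf]
      simp only
      set b := m - 1 - k with hb
      have hm : m = k + b + 1 := by omega
      have e1 : m + 1 - (k + 1) = b + 1 := by omega
      have e2 : m - (k + 1) = b := by omega
      have e3 : k + 1 - 1 = k := by omega
      rw [e1, e2, e3]
      have hc := coef_mid α β m k b hm
      have hcp := congrArg (Polynomial.C : ℝ → ℝ[X]) hc
      simp only [map_add, map_mul, map_sub, map_one, map_ofNat] at hcp ⊢
      linear_combination (u ^ (b + 1) * v ^ (k + 1)) * hcp
  -- assemble
  simp only [Finset.mul_sum]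
  rw [Finset.sum_congr rfl hthird, Finset.sum_sub_distrib]
  have hF : ∑ j ∈ Finset.range (m + 1), Ff (j + 1)
      = (∑ j ∈ Finset.range (m + 2), Ff j) - Ff 0 := by
    rw [Finset.sum_range_succ' Ff (m + 1)]; ring
  have hG : ∑ j ∈ Finset.range (m + 1), Gf j
      = (∑ j ∈ Finset.range (m + 2), Gf j) - Gf (m + 1) := by
    rw [Finset.sum_range_succ Gf (m + 1)]; ring
  rw [hF, hG]
  have hmain := Finset.sum_congr rfl main
  simp only [Finset.sum_add_distrib] at hmain
  rw [Finset.sum_ite_eq' (Finset.range (m + 2)) 0 Ff,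
      Finset.sum_ite_eq' (Finset.range (m + 2)) (m + 1) Gf] at hmain
  rw [if_pos (by simp), if_pos (by simp)] at hmain
  linear_combination hmain

lemma jacobiP_succ_expand (α β : ℝ) (m : ℕ) :
    jacobiP α β (m + 1) = C ((2:ℝ)⁻¹ ^ (m+1)) *
      ∑ j ∈ Finset.range (m + 2),
        C (genBinom ((m : ℝ) + 1 + α) j * genBinom ((m : ℝ) + 1 + β) (m + 1 - j)) *
          (X - 1) ^ (m + 1 - j) * (X + 1) ^ j := by
  unfold jacobiP
  push_cast
  rfl

lemma beta_step (α β : ℝ) (m : ℕ) :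
    C (2 * (m : ℝ) + α + β + 3) * jacobiP α β (m + 1)
    = C ((m : ℝ) + α + β + 2) * jacobiP α (β + 1) (m + 1)
      + C ((m : ℝ) + 1 + α) * jacobiP α (β + 1) m := by
  have e1 := jacobiP_succ_expand α β m
  have e2 : jacobiP α (β + 1) (m + 1) = C ((2:ℝ)⁻¹ ^ (m+1)) *
      ∑ j ∈ Finset.range (m + 2),
        C (genBinom ((m : ℝ) + 1 + α) j * genBinom ((m : ℝ) + 1 + β + 1) (m + 1 - j)) *
          (X - 1) ^ (m + 1 - j) * (X + 1) ^ j := by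
    rw [jacobiP_succ_expand α (β+1) m]
    simp only [show (m:ℝ) + 1 + (β+1) = (m:ℝ) + 1 + β + 1 from by ring]
  have e3 : jacobiP α (β + 1) m = C ((2:ℝ)⁻¹ ^ m) *
      ∑ j ∈ Finset.range (m + 1),
        C (genBinom ((m : ℝ) + α) j * genBinom ((m : ℝ) + 1 + β) (m - j)) *
          (X - 1) ^ (m - j) * (X + 1) ^ j := by
    unfold jacobiP
    simp only [show (m:ℝ) + (β+1) = (m:ℝ) + 1 + β from by ring]
  rw [e1, e2, e3]
  have si := sum_identity α β m
  have h2 : (C ((2:ℝ)⁻¹ ^ (m+1)) : ℝ[X]) * C (2:ℝ) = C ((2:ℝ)⁻¹ ^ m) := by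
    rw [← C_mul]
    congr 1
    rw [pow_succ]
    field_simp
  linear_combination (C ((2:ℝ)⁻¹ ^ (m+1))) * si
    + (C ((m : ℝ) + 1 + α) * ∑ j ∈ Finset.range (m + 1),
        C (genBinom ((m : ℝ) + α) j * genBinom ((m : ℝ) + 1 + β) (m - j)) *
          (X - 1) ^ (m - j) * (X + 1) ^ j) * h2

lemma jacobiP_comp_neg (α β : ℝ) (n : ℕ) :
    (jacobiP β α n).comp (-X) = C ((-1:ℝ) ^ n) * jacobiP α β n := by
  unfold jacobiP
  rw [mul_comp, C_comp, Polynomial.sum_comp]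
  have hterm : ∀ j ∈ Finset.range (n + 1),
      (C (genBinom ((n : ℝ) + β) j * genBinom ((n : ℝ) + α) (n - j)) *
        (X - 1) ^ (n - j) * (X + 1) ^ j).comp (-X)
      = C ((-1:ℝ) ^ n) * (C (genBinom ((n : ℝ) + α) (n - j) * genBinom ((n : ℝ) + β) j) *
          (X - 1) ^ j * (X + 1) ^ (n - j)) := by
    intro j hj
    rw [Finset.mem_range] at hj
    have hj' : j ≤ n := by omega
    rw [mul_comp, mul_comp, C_comp, pow_comp, pow_comp, sub_comp, add_comp, X_comp, one_comp]
    have h1 : (-X - 1 : ℝ[X]) = -(X + 1) := by ring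
    have h2 : (-X + 1 : ℝ[X]) = -(X - 1) := by ring
    rw [h1, h2, neg_pow ((X:ℝ[X]) + 1) (n - j), neg_pow ((X:ℝ[X]) - 1) j]
    have h3 : ((-1:ℝ[X]) ^ (n - j)) * ((-1:ℝ[X]) ^ j) = C ((-1:ℝ)^n) := by
      rw [← pow_add]
      have e : n - j + j = n := by omega
      rw [e]
      have : (-1 : ℝ[X]) = C (-1 : ℝ) := by rw [map_neg, map_one]
      rw [this, ← map_pow]
    simp only [map_mul]
    linear_combination ((X+1:ℝ[X])^(n-j) * (X-1:ℝ[X])^j *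
      (C (genBinom ((n : ℝ) + β) j) * C (genBinom ((n : ℝ) + α) (n - j)))) * h3
  rw [Finset.sum_congr rfl hterm]
  rw [← Finset.sum_range_reflect]
  simp only [Finset.mul_sum]
  apply Finset.sum_congr rfl
  intro j hj
  rw [Finset.mem_range] at hj
  have e1 : n + 1 - 1 - j = n - j := by omega
  have e2 : n - (n - j) = j := by omega
  rw [e1, e2]
  simp only [map_mul]
  ring

lemma alpha_step (α β : ℝ) (m : ℕ) :
    C (2 * (m : ℝ) + α + β + 3) * jacobiP α β (m + 1)
    = C ((m : ℝ) + α + β + 2) * jacobiP (α + 1) β (m + 1)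
      - C ((m : ℝ) + 1 + β) * jacobiP (α + 1) β m := by
  have h := beta_step β α m
  have hcomp := congrArg (fun p : ℝ[X] => p.comp (-X)) h
  simp only [mul_comp, add_comp, C_comp] at hcomp
  rw [jacobiP_comp_neg α β (m + 1), jacobiP_comp_neg (α + 1) β (m + 1),
      jacobiP_comp_neg (α + 1) β m] at hcomp
  rw [show (2 * (m:ℝ) + β + α + 3) = 2 * (m:ℝ) + α + β + 3 from by ring,
      show ((m:ℝ) + β + α + 2) = (m:ℝ) + α + β + 2 from by ring] at hcomp
  have k1 : (C ((-1:ℝ) ^ (m+1)) : ℝ[X]) * C ((-1:ℝ) ^ (m+1)) = 1 := by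
    rw [← map_mul, ← pow_add, Even.neg_one_pow ⟨m + 1, by ring⟩, map_one]
  have k2 : (C ((-1:ℝ) ^ (m+1)) : ℝ[X]) * C ((-1:ℝ) ^ m) = -1 := by
    rw [← map_mul, ← pow_add, Odd.neg_one_pow ⟨m, by ring⟩, map_neg, map_one]
  linear_combination (C ((-1:ℝ) ^ (m+1))) * hcomp
    - (C (2 * (m:ℝ) + α + β + 3) * jacobiP α β (m + 1)
        - C ((m:ℝ) + α + β + 2) * jacobiP (α + 1) β (m + 1)) * k1
    + (C ((m:ℝ) + 1 + β) * jacobiP (α + 1) β m) * k2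

lemma jacobiP_zero_eq (α β : ℝ) : jacobiP α β 0 = 1 := by
  unfold jacobiP
  simp [genBinom]

def Wset (α β : ℝ) (n t : ℕ) : Set (Polynomial ℝ) :=
  {p | ∃ m : ℕ, m ≤ n ∧ n ≤ m + t ∧ p = jacobiP α β m}

lemma mem_span_beta (α β : ℝ) (n t : ℕ)
    (hden : ∀ m : ℕ, m + 1 ≤ n → n ≤ m + 1 + t → 2 * (m:ℝ) + α + β + 3 ≠ 0) :
    ∀ p ∈ Wset α β n t, p ∈ Submodule.span ℝ (Wset α (β + 1) n (t + 1)) := by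
  rintro p ⟨m, h1, h2, rfl⟩
  cases m with
  | zero =>
    rw [jacobiP_zero_eq, ← jacobiP_zero_eq α (β + 1)]
    exact Submodule.subset_span ⟨0, by omega, by omega, rfl⟩
  | succ m =>
    have hd := hden m h1 h2
    have hb := beta_step α β m
    have hinv : (C ((2*(m:ℝ)+α+β+3)⁻¹) : ℝ[X]) * C (2*(m:ℝ)+α+β+3) = 1 := by
      rw [← map_mul, inv_mul_cancel₀ hd, map_one]
    have hrep : jacobiP α β (m + 1)
        = ((2*(m:ℝ)+α+β+3)⁻¹ * ((m:ℝ)+α+β+2)) • jacobiP α (β+1) (m+1)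
          + ((2*(m:ℝ)+α+β+3)⁻¹ * ((m:ℝ)+1+α)) • jacobiP α (β+1) m := by
      rw [Polynomial.smul_eq_C_mul, Polynomial.smul_eq_C_mul, map_mul, map_mul]
      linear_combination (C ((2*(m:ℝ)+α+β+3)⁻¹)) * hb - (jacobiP α β (m+1)) * hinv
    rw [hrep]
    exact Submodule.add_mem _
      (Submodule.smul_mem _ _ (Submodule.subset_span ⟨m+1, h1, by omega, rfl⟩))
      (Submodule.smul_mem _ _ (Submodule.subset_span ⟨m, by omega, by omega, rfl⟩))

lemma mem_span_alpha (α β : ℝ) (n t : ℕ)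
    (hden : ∀ m : ℕ, m + 1 ≤ n → n ≤ m + 1 + t → 2 * (m:ℝ) + α + β + 3 ≠ 0) :
    ∀ p ∈ Wset α β n t, p ∈ Submodule.span ℝ (Wset (α + 1) β n (t + 1)) := by
  rintro p ⟨m, h1, h2, rfl⟩
  cases m with
  | zero =>
    rw [jacobiP_zero_eq, ← jacobiP_zero_eq (α + 1) β]
    exact Submodule.subset_span ⟨0, by omega, by omega, rfl⟩
  | succ m =>
    have hd := hden m h1 h2
    have ha := alpha_step α β m
    have hinv : (C ((2*(m:ℝ)+α+β+3)⁻¹) : ℝ[X]) * C (2*(m:ℝ)+α+β+3) = 1 := by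
      rw [← map_mul, inv_mul_cancel₀ hd, map_one]
    have hrep : jacobiP α β (m + 1)
        = ((2*(m:ℝ)+α+β+3)⁻¹ * ((m:ℝ)+α+β+2)) • jacobiP (α+1) β (m+1)
          + (-((2*(m:ℝ)+α+β+3)⁻¹ * ((m:ℝ)+1+β))) • jacobiP (α+1) β m := by
      rw [Polynomial.smul_eq_C_mul, Polynomial.smul_eq_C_mul, map_neg, map_mul, map_mul]
      linear_combination (C ((2*(m:ℝ)+α+β+3)⁻¹)) * ha - (jacobiP α β (m+1)) * hinv
    rw [hrep]
    exact Submodule.add_mem _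
      (Submodule.smul_mem _ _ (Submodule.subset_span ⟨m+1, h1, by omega, rfl⟩))
      (Submodule.smul_mem _ _ (Submodule.subset_span ⟨m, by omega, by omega, rfl⟩))

lemma main_span (α β : ℝ) (n : ℕ) :
    ∀ N : ℕ, (∀ k : ℕ, 1 ≤ k → k ≤ n + 2 * N → α + β + (n:ℝ) ≠ -(k:ℝ)) →
      jacobiP α β n ∈
        Submodule.span ℝ (Wset (α + (N:ℝ)) (β + (N:ℝ)) n (2 * N)) := by
  intro N
  induction N with
  | zero =>
    intro _
    apply Submodule.subset_span
    exact ⟨n, le_rfl, by omega, by norm_num⟩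
  | succ N ih =>
    intro h
    have base := ih (fun k hk1 hk2 => h k hk1 (by omega))
    have hden1 : ∀ m : ℕ, m + 1 ≤ n → n ≤ m + 1 + 2 * N →
        2 * (m:ℝ) + (α + (N:ℝ)) + (β + (N:ℝ)) + 3 ≠ 0 := by
      intro m hm1 hm2 heq
      refine h (2*m + 2*N + 3 - n) (by omega) (by omega) ?_
      rw [Nat.cast_sub (by omega)]
      push_cast
      linarith [heq]
    have hden2 : ∀ m : ℕ, m + 1 ≤ n → n ≤ m + 1 + (2 * N + 1) →
        2 * (m:ℝ) + (α + (N:ℝ)) + (β + (N:ℝ) + 1) + 3 ≠ 0 := by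
      intro m hm1 hm2 heq
      refine h (2*m + 2*N + 4 - n) (by omega) (by omega) ?_
      rw [Nat.cast_sub (by omega)]
      push_cast
      linarith [heq]
    have s1 : Submodule.span ℝ (Wset (α + (N:ℝ)) (β + (N:ℝ)) n (2 * N))
        ≤ Submodule.span ℝ (Wset (α + (N:ℝ)) (β + (N:ℝ) + 1) n (2 * N + 1)) := by
      rw [Submodule.span_le]
      exact fun p hp => mem_span_beta (α + (N:ℝ)) (β + (N:ℝ)) n (2 * N) hden1 p hp
    have s2 : Submodule.span ℝ (Wset (α + (N:ℝ)) (β + (N:ℝ) + 1) n (2 * N + 1))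
        ≤ Submodule.span ℝ (Wset (α + (N:ℝ) + 1) (β + (N:ℝ) + 1) n (2 * N + 1 + 1)) := by
      rw [Submodule.span_le]
      exact fun p hp => mem_span_alpha (α + (N:ℝ)) (β + (N:ℝ) + 1) n (2 * N + 1) hden2 p hp
    have final := s2 (s1 base)
    have e1 : α + ((N:ℕ) + 1 : ℕ) = α + (N:ℝ) + 1 := by push_cast; ring
    have e2 : β + ((N:ℕ) + 1 : ℕ) = β + (N:ℝ) + 1 := by push_cast; ring
    have e3 : 2 * (N + 1) = 2 * N + 1 + 1 := by omega
    rw [e1, e2, e3]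
    exact final


end AuxJacobiShift

/-- Lemma: a Jacobi polynomial is a linear combination of 2N+1 Jacobi polynomials with both
parameters shifted by N. -/
theorem jacobiP_linear_combination_shift
    (α β : ℝ) (n N : ℕ)
    (h : ∀ k : ℕ, 1 ≤ k → k ≤ n + 2 * N → α + β + (n : ℝ) ≠ -(k : ℝ)) :
    ∃ c : ℕ → ℝ, jacobiP α β n =
      ∑ i ∈ Finset.range (2 * N + 1),
        Polynomial.C (c i) *
          (if i ≤ n then jacobiP (α + (N : ℝ)) (β + (N : ℝ)) (n - i) else 0) := by
  have hs := main_span α β n N h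
  set f : Fin (2 * N + 1) → Polynomial ℝ := fun i =>
    if (i : ℕ) ≤ n then jacobiP (α + (N:ℝ)) (β + (N:ℝ)) (n - (i : ℕ)) else 0 with hf
  have hsub : Wset (α + (N:ℝ)) (β + (N:ℝ)) n (2 * N) ⊆ Set.range f := by
    rintro p ⟨m, h1, h2, rfl⟩
    refine ⟨⟨n - m, by omega⟩, ?_⟩
    show (if n - m ≤ n then jacobiP (α + (N:ℝ)) (β + (N:ℝ)) (n - (n - m)) else 0)
      = jacobiP (α + (N:ℝ)) (β + (N:ℝ)) m
    rw [if_pos (by omega : n - m ≤ n), show n - (n - m) = m from by omega]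
  have hmem : jacobiP α β n ∈ Submodule.span ℝ (Set.range f) :=
    Submodule.span_mono hsub hs
  rw [Submodule.mem_span_range_iff_exists_fun] at hmem
  obtain ⟨c, hc⟩ := hmem
  refine ⟨fun i => if hi : i < 2 * N + 1 then c ⟨i, hi⟩ else 0, ?_⟩
  rw [← hc, ← Fin.sum_univ_eq_sum_range]
  apply Finset.sum_congr rfl
  intro i _
  simp [hf, Polynomial.smul_eq_C_mul, i.isLt]

end
end
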